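/- arXiv:1206.0518 — 3 statements merged into one kernel-verified Lean document; each statement's English description precedes it below -/
import Mathlib

section
/- Let (X,T) be a topological dynamical system with metric d such that T is Lipschitz continuous with Lipschitz constant L > 1 (i.e. d(Tx,Ty) ≤ L·d(x,y) for all x,y ∈ X). Then for every subset C ⊆ X, the Hausdorff dimension satisfies H_d(C) ≥ h^B(T,C)/log L. -/
/-!
Fix a finite open cover `U` with Lebesgue number `δ`. If `diam E · Lᵐ ≤ δ`, then every `Tⁱ E`
with `i ≤ m` has diameter at most `δ`, so it lies in a member of `U`. Hence
`n_{T,U}(E) > log_L (δ / diam E)`, that is `exp (-s log L · n_{T,U}(E)) ≤ (diam E / δ)ˢ`.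
For `s > H_d(C)` we have `μH[s] C = 0`, and covers of `C` by sets of diameter at most `δ / Lᵏ`
with small `∑ (diam E)ˢ` show that `m_{T,U}(C, s log L) = 0`.
-/

open Set Filter MeasureTheory
open scoped Classical ENNReal

noncomputable section

namespace Lowering

variable {X : Type*} [TopologicalSpace X]

/-- A finite open cover of the whole space. -/
def IsFinOpenCover (U : Finset (Set X)) : Prop :=
  (∀ u ∈ U, IsOpen u) ∧ ⋃₀ (U : Set (Set X)) = Set.univ

/-- The dynamical refinement `⋁_{i=0}^{n-1} T⁻ⁱ U` of a family of subsets. -/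
def dynRefine (T : X → X) (U : Set (Set X)) (n : ℕ) : Set (Set X) :=
  {V | ∃ f : ℕ → Set X, (∀ i < n, f i ∈ U) ∧ V = ⋂ i ∈ Finset.range n, T^[i] ⁻¹' f i}

/-- `N(V, K)`: the minimal cardinality of a finite subfamily of `V` covering `K`
(with the convention `N(V, ∅) = 1`). -/
def coverNum (V : Set (Set X)) (K : Set X) : ℕ :=
  if K = ∅ then 1
  else sInf {n : ℕ | ∃ F : Finset (Set X), ↑F ⊆ V ∧ K ⊆ ⋃₀ (F : Set (Set X)) ∧ F.card = n}

/-- `h_U(T, K) = limsup_n (1/n) log N(⋁_{i=0}^{n-1} T⁻ⁱU, K)`. -/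
def coverEntropyOf (T : X → X) (U : Finset (Set X)) (K : Set X) : EReal :=
  Filter.atTop.limsup fun n : ℕ =>
    ((Real.log (coverNum (dynRefine T (↑U) n) K) / n : ℝ) : EReal)

/-- The covering entropy `h(T, K)` of a subset `K`. -/
def coverEntropy (T : X → X) (K : Set X) : EReal :=
  ⨆ (U : Finset (Set X)) (_ : IsFinOpenCover U), coverEntropyOf T U K

/-- `n_{T,U}(E)`: the largest `j` (possibly `∞`) such that `Tⁱ E` is contained in some member
of `U` for all `0 ≤ i ≤ j - 1`. -/
def bowenN (T : X → X) (U : Finset (Set X)) (E : Set X) : ℕ∞ :=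
  ⨆ j ∈ {j : ℕ | ∀ i < j, ∃ u ∈ U, T^[i] '' E ⊆ u}, (j : ℕ∞)

/-- The weight `exp (-λ n)`, with the conventions `0 ⬝ ∞ = 0`. -/
def expWeight (lam : ℝ) (n : ℕ∞) : ℝ≥0∞ :=
  if h : n = ⊤ then (if 0 < lam then 0 else if lam < 0 then ⊤ else 1)
  else ENNReal.ofReal (Real.exp (-lam * (n.untop h : ℕ)))

/-- `m_{T,U}(K, λ, k)` (with the paper's conventions for `K = ∅`). -/
def mPre (T : X → X) (U : Finset (Set X)) (K : Set X) (lam : ℝ) (k : ℕ) : ℝ≥0∞ :=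
  if K = ∅ then (if lam < 0 then ⊤ else if lam = 0 then 1 else 0)
  else ⨅ (𝓔 : Set (Set X)) (_ : 𝓔.Countable) (_ : K ⊆ ⋃₀ 𝓔)
        (_ : ∀ E ∈ 𝓔, ∃ V ∈ dynRefine T (↑U) k, E ⊆ V),
      ∑' E : 𝓔, expWeight lam (bowenN T U (E : Set X))

/-- `m_{T,U}(K, λ) = lim_{k → ∞} m_{T,U}(K, λ, k)`, the limit of the nondecreasing
sequence `k ↦ m_{T,U}(K, λ, k)`, i.e. its supremum. -/
def mBowen (T : X → X) (U : Finset (Set X)) (K : Set X) (lam : ℝ) : ℝ≥0∞ :=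
  ⨆ k : ℕ, mPre T U K lam k

/-- `h^B_U(T,K) = inf {λ : m_{T,U}(K,λ) = 0}`. -/
def bowenEntropyOf (T : X → X) (U : Finset (Set X)) (K : Set X) : EReal :=
  ⨅ (lam : ℝ) (_ : mBowen T U K lam = 0), (lam : EReal)

/-- The dimensional (Bowen) entropy `h^B(T, K)` of a subset `K`. -/
def bowenEntropy (T : X → X) (K : Set X) : EReal :=
  ⨆ (U : Finset (Set X)) (_ : IsFinOpenCover U), bowenEntropyOf T U K

/-- Souslin sets: sets of the form `⋃_{(i₁,i₂,…) ∈ ℕ^ℕ} ⋂_k E_{i₁,…,i_k}` with all the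
`E_{i₁,…,i_k}` closed. -/
def IsSouslin (K : Set X) : Prop :=
  ∃ E : List ℕ → Set X, (∀ l, IsClosed (E l)) ∧
    K = ⋃ σ : ℕ → ℕ, ⋂ k : ℕ, E (List.ofFn fun i : Fin (k + 1) => σ i)

def Lowerable (T : X → X) : Prop :=
  ∀ h : ℝ, 0 ≤ h → (h : EReal) ≤ coverEntropy T Set.univ →
    ∃ K : Set X, IsClosed K ∧ coverEntropy T K = (h : EReal)

def HereditarilyLowerable (T : X → X) : Prop :=
  ∀ K : Set X, IsClosed K → ∀ h : ℝ, 0 ≤ h → (h : EReal) ≤ coverEntropy T K →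
    ∃ K' ⊆ K, IsClosed K' ∧ coverEntropy T K' = (h : EReal)

def DLowerable (T : X → X) : Prop :=
  ∀ h : ℝ, 0 ≤ h → (h : EReal) ≤ coverEntropy T Set.univ →
    ∃ K : Set X, bowenEntropy T K = (h : EReal)

def DHereditarilyLowerable (T : X → X) : Prop :=
  ∀ K : Set X, IsSouslin K → ∀ h : ℝ, 0 ≤ h → (h : EReal) ≤ bowenEntropy T K →
    ∃ K' ⊆ K, bowenEntropy T K' = (h : EReal)

/-- `Φ_ε(x) = {y : d(Tⁿx, Tⁿy) ≤ ε for all n ≥ 0}`. -/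
def phiSet {Y : Type*} [PseudoMetricSpace Y] (T : Y → Y) (ε : ℝ) (x : Y) : Set Y :=
  {y | ∀ n : ℕ, dist (T^[n] x) (T^[n] y) ≤ ε}

/-- Asymptotic h-expansiveness: `lim_{ε → 0+} sup_x h(T, Φ_ε(x)) = 0`. -/
def AsympHExpansive {Y : Type*} [MetricSpace Y] (T : Y → Y) : Prop :=
  Filter.Tendsto (fun ε : ℝ => ⨆ x : Y, coverEntropy T (phiSet T ε x))
    (nhdsWithin 0 (Set.Ioi 0)) (nhds (0 : EReal))

/-- `N((U₁)₀ⁿ⁻¹ | (U₂)₀ⁿ⁻¹) = max_{V ∈ (U₂)₀ⁿ⁻¹} N((U₁)₀ⁿ⁻¹, V)`. -/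
def relCoverNum (T : X → X) (U1 U2 : Finset (Set X)) (n : ℕ) : ℕ :=
  sSup {k : ℕ | ∃ V ∈ dynRefine T (↑U2) n, k = coverNum (dynRefine T (↑U1) n) V}

/-- The topologically conditional entropy `h^*(T, X)`. -/
def condTopEntropy (T : X → X) : EReal :=
  ⨅ (U2 : Finset (Set X)) (_ : IsFinOpenCover U2),
    ⨆ (U1 : Finset (Set X)) (_ : IsFinOpenCover U1),
      ((⨅ n : ℕ, Real.log (relCoverNum T U1 U2 (n + 1)) / (n + 1) : ℝ) : EReal)

open Metric
open scoped NNReal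

theorem _root_.Metric.exists_forall_ediam_le_subset_of_sUnion_eq_univ {X : Type*}
    [PseudoMetricSpace X] [CompactSpace X] [Nonempty X] {U : Set (Set X)} (hUo : ∀ u ∈ U, IsOpen u)
    (hU : ⋃₀ U = univ) :
    ∃ δ > (0 : ℝ), ∀ E : Set X, ediam E ≤ ENNReal.ofReal δ → ∃ u ∈ U, E ⊆ u := by
  obtain ⟨δ, hδ, hball⟩ := lebesgue_number_lemma_of_metric_sUnion isCompact_univ hUo hU.ge
  refine ⟨δ / 2, by positivity, fun E hE => ?_⟩
  rcases E.eq_empty_or_nonempty with rfl | ⟨x, hx⟩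
  · obtain ⟨u, hu, -⟩ := hball (Classical.arbitrary X) (mem_univ _)
    exact ⟨u, hu, empty_subset u⟩
  · obtain ⟨u, hu, hsub⟩ := hball x (mem_univ x)
    refine ⟨u, hu, fun y hy => hsub ?_⟩
    have : dist y x ≤ δ / 2 := by
      rw [← edist_le_ofReal (by positivity)]
      exact (edist_le_ediam_of_mem hy hx).trans hE
    exact Metric.mem_ball.2 (by linarith)

theorem _root_.LipschitzWith.exists_mem_image_iterate_subset {X : Type*} [PseudoEMetricSpace X]
    {T : X → X} {K : ℝ≥0} (hT : LipschitzWith K T) (hK : 1 ≤ K) {U : Set (Set X)} {δ : ℝ≥0∞}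
    (hδ : ∀ E : Set X, ediam E ≤ δ → ∃ u ∈ U, E ⊆ u) {E : Set X} {m : ℕ}
    (hE : ediam E * K ^ m ≤ δ) {i : ℕ} (hi : i ≤ m) : ∃ u ∈ U, T^[i] '' E ⊆ u := by
  refine hδ _ ((hT.iterate i).ediam_image_le E |>.trans ?_)
  calc ((K ^ i : ℝ≥0) : ℝ≥0∞) * ediam E ≤ ediam E * K ^ m := by
        rw [mul_comm, ENNReal.coe_pow]
        gcongr
        · exact_mod_cast hK
    _ ≤ δ := hE

theorem _root_.MeasureTheory.exists_cover_tsum_ediam_rpow_lt_of_hausdorffMeasure_eq_zero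
    {X : Type*} [EMetricSpace X] [MeasurableSpace X] [BorelSpace X] {d : ℝ} (hd : 0 < d) {s : Set X} (hs : μH[d] s = 0)
    {r : ℝ≥0∞} (hr : 0 < r) {ε : ℝ≥0∞} (hε : 0 < ε) :
    ∃ t : ℕ → Set X, s ⊆ ⋃ n, t n ∧ (∀ n, ediam (t n) ≤ r) ∧ ∑' n, ediam (t n) ^ d < ε := by
  rw [Measure.hausdorffMeasure_apply] at hs
  have hlt := (iSup₂_eq_bot.1 hs r hr).le.trans_lt hε
  simp only [iInf_lt_iff] at hlt
  obtain ⟨t, hcov, hdiam, hsum⟩ := hlt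
  refine ⟨t, hcov, hdiam, lt_of_le_of_lt (ENNReal.tsum_le_tsum fun n => ?_) hsum⟩
  rcases (t n).eq_empty_or_nonempty with he | hne
  · simp [he, ENNReal.zero_rpow_of_pos hd]
  · exact le_iSup_of_le hne le_rfl

theorem _root_.EReal.le_coe_ennreal_mul_of_forall_lt {x : EReal} {a : ℝ≥0∞} {c : ℝ} (hc : 0 < c)
    (H : ∀ s : ℝ, a < ENNReal.ofReal s → x ≤ ((s * c : ℝ) : EReal)) : x ≤ a * c := by
  rcases eq_or_ne a ⊤ with rfl | ha
  · rw [EReal.coe_ennreal_top, EReal.top_mul_of_pos (by exact_mod_cast hc)]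
    exact le_top
  refine le_of_forall_gt_imp_ge_of_dense fun y hy => ?_
  induction y with
  | bot => exact absurd hy not_lt_bot
  | top => exact le_top
  | coe y =>
    rw [← EReal.coe_ennreal_toReal ha, ← EReal.coe_mul, EReal.coe_lt_coe_iff] at hy
    have hlt : a < ENNReal.ofReal (y / c) := by
      rw [← ENNReal.ofReal_toReal ha]
      exact (ENNReal.ofReal_lt_ofReal_iff_of_nonneg ENNReal.toReal_nonneg).2
        ((lt_div_iff₀ hc).2 hy)
    simpa [div_mul_cancel₀ y hc.ne'] using H _ hlt

section

variable {X : Type*}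

theorem expWeight_top {lam : ℝ} (hlam : 0 < lam) : expWeight lam ⊤ = 0 := by
  rw [expWeight, dif_pos rfl, if_pos hlam]

theorem expWeight_le_of_natCast_le {lam : ℝ} (hlam : 0 < lam) {n : ℕ∞} {m : ℕ}
    (hm : (m : ℕ∞) ≤ n) : expWeight lam n ≤ ENNReal.ofReal (Real.exp (-lam * m)) := by
  rcases eq_or_ne n ⊤ with rfl | hn
  · rw [expWeight_top hlam]
    exact zero_le
  rw [expWeight, dif_neg hn]
  have : (m : ℝ) ≤ n.untop hn := by exact_mod_cast (WithTop.le_untop_iff _).2 hm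
  exact ENNReal.ofReal_le_ofReal <| Real.exp_le_exp.2 <| by nlinarith

theorem expWeight_mul_log_le {s L δ d : ℝ} (hs : 0 < s) (hL : 1 < L) (hd : 0 < d) (hdδ : d ≤ δ)
    {n : ℕ∞} (h : ∀ m : ℕ, d * L ^ m ≤ δ → ((m + 1 : ℕ) : ℕ∞) ≤ n) :
    expWeight (s * Real.log L) n ≤ ENNReal.ofReal (δ ^ (-s) * d ^ s) := by
  have hδ : 0 < δ := hd.trans_le hdδ
  obtain ⟨m, hle, hlt⟩ := exists_nat_pow_near ((one_le_div hd).2 hdδ) hL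
  refine (expWeight_le_of_natCast_le (mul_pos hs (Real.log_pos hL)) (h m ?_)).trans
    (ENNReal.ofReal_le_ofReal ?_)
  · rwa [le_div_iff₀ hd, mul_comm] at hle
  calc Real.exp (-(s * Real.log L) * ((m + 1 : ℕ) : ℝ))
      = Real.exp (-(s * Real.log (L ^ (m + 1)))) := by
        rw [Real.log_pow]; push_cast; ring_nf
    _ ≤ Real.exp (-(s * Real.log (δ / d))) := by gcongr
    _ = δ ^ (-s) * d ^ s := by
        rw [Real.log_div hδ.ne' hd.ne', Real.rpow_def_of_pos hδ, Real.rpow_def_of_pos hd,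
          ← Real.exp_add]
        ring_nf

theorem le_bowenN {T : X → X} {U : Finset (Set X)} {E : Set X} {m : ℕ}
    (h : ∀ i < m, ∃ u ∈ U, T^[i] '' E ⊆ u) : (m : ℕ∞) ≤ bowenN T U E :=
  le_iSup₂ (f := fun (j : ℕ) (_ : j ∈ {j : ℕ | ∀ i < j, ∃ u ∈ U, T^[i] '' E ⊆ u}) => (j : ℕ∞))
    m h

theorem exists_mem_dynRefine_subset {T : X → X} {U : Set (Set X)} {E : Set X} {k : ℕ}
    (h : ∀ i < k, ∃ u ∈ U, T^[i] '' E ⊆ u) : ∃ V ∈ dynRefine T U k, E ⊆ V := by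
  choose! u hu hsub using h
  refine ⟨⋂ i ∈ Finset.range k, T^[i] ⁻¹' u i, ⟨u, hu, rfl⟩, fun y hy => ?_⟩
  simp only [mem_iInter, Finset.mem_range]
  exact fun i hi => hsub i hi (mem_image_of_mem _ hy)

theorem mPre_le_tsum {T : X → X} {U : Finset (Set X)} {C : Set X} (hC : C.Nonempty) {lam : ℝ}
    {k : ℕ} {t : ℕ → Set X} (hcov : C ⊆ ⋃ n, t n)
    (href : ∀ n, ∃ V ∈ dynRefine T U k, t n ⊆ V) :
    mPre T U C lam k ≤ ∑' n, expWeight lam (bowenN T U (t n)) := by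
  calc mPre T U C lam k ≤ ∑' E : range t, expWeight lam (bowenN T U E) := by
        rw [mPre, if_neg hC.ne_empty]
        refine iInf_le_of_le (range t) (iInf_le_of_le (countable_range t)
          (iInf_le_of_le (by rwa [sUnion_range]) (iInf_le_of_le ?_ le_rfl)))
        rintro _ ⟨n, rfl⟩
        exact href n
    _ ≤ ∑' n, expWeight lam (bowenN T U (t n)) :=
        ENNReal.tsum_le_tsum_comp_of_surjective (f := rangeFactorization t)
          rangeFactorization_surjective _

end

section Lipschitz

variable {X : Type*} [MetricSpace X] {T : X → X} {L : ℝ} {U : Finset (Set X)} {δ : ℝ}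

theorem expWeight_bowenN_le (hL : 1 < L) (hT : LipschitzWith L.toNNReal T)
    (hδ : ∀ E : Set X, ediam E ≤ ENNReal.ofReal δ → ∃ u ∈ U, E ⊆ u) {s : ℝ} (hs : 0 < s)
    {E : Set X} (hE : ediam E ≤ ENNReal.ofReal δ) :
    expWeight (s * Real.log L) (bowenN T U E) ≤ ENNReal.ofReal (δ ^ (-s)) * ediam E ^ s := by
  have hbowen : ∀ m : ℕ, ediam E * ENNReal.ofReal L ^ m ≤ ENNReal.ofReal δ →
      ((m + 1 : ℕ) : ℕ∞) ≤ bowenN T U E := fun m hm =>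
    le_bowenN fun i hi => hT.exists_mem_image_iterate_subset (by simpa using hL.le) hδ hm
      (Nat.lt_succ_iff.1 hi)
  rcases eq_or_ne (ediam E) 0 with h0 | h0
  · rw [ENat.eq_top_iff_forall_ge.2 fun m => (Nat.cast_le.2 m.le_succ).trans
      (hbowen m (by simp [h0])), expWeight_top (mul_pos hs (Real.log_pos hL))]
    exact zero_le
  have hfin : ediam E ≠ ⊤ := ne_top_of_le_ne_top ENNReal.ofReal_ne_top hE
  have hd : 0 < (ediam E).toReal := ENNReal.toReal_pos h0 hfin
  have hδ0 : 0 < δ := ENNReal.ofReal_pos.1 ((pos_iff_ne_zero.2 h0).trans_le hE)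
  rw [← ENNReal.ofReal_toReal hfin, ENNReal.ofReal_rpow_of_pos hd,
    ← ENNReal.ofReal_mul (by positivity)]
  refine expWeight_mul_log_le hs hL hd (ENNReal.toReal_le_of_le_ofReal hδ0.le hE)
    fun m hm => hbowen m ?_
  rw [← ENNReal.ofReal_toReal hfin, ← ENNReal.ofReal_pow (by linarith),
    ← ENNReal.ofReal_mul ENNReal.toReal_nonneg]
  exact ENNReal.ofReal_le_ofReal hm

theorem mPre_mul_log_eq_zero [MeasurableSpace X] [BorelSpace X] (hL : 1 < L)
    (hT : LipschitzWith L.toNNReal T) (hδ0 : 0 < δ)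
    (hδ : ∀ E : Set X, ediam E ≤ ENNReal.ofReal δ → ∃ u ∈ U, E ⊆ u) {C : Set X}
    (hC : C.Nonempty) {s : ℝ} (hs : 0 < s) (hCs : μH[s] C = 0) (k : ℕ) :
    mPre T U C (s * Real.log L) k = 0 := by
  refine nonpos_iff_eq_zero.1 (ENNReal.le_of_forall_pos_le_add fun ε hε _ => ?_)
  set c := ENNReal.ofReal (δ ^ (-s))
  have hLk0 : ENNReal.ofReal L ^ k ≠ 0 := pow_ne_zero k (ENNReal.ofReal_pos.2 (by linarith)).ne'
  have hLktop : ENNReal.ofReal L ^ k ≠ ⊤ := ENNReal.pow_ne_top ENNReal.ofReal_ne_top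
  have hr : 0 < ENNReal.ofReal δ / ENNReal.ofReal L ^ k :=
    ENNReal.div_pos (ENNReal.ofReal_pos.2 hδ0).ne' hLktop
  have hεc : 0 < (ε : ℝ≥0∞) / c := ENNReal.div_pos (by simpa using hε.ne') ENNReal.ofReal_ne_top
  obtain ⟨t, hcov, hdiam, hsum⟩ :=
    exists_cover_tsum_ediam_rpow_lt_of_hausdorffMeasure_eq_zero hs hCs hr hεc
  have hscaled : ∀ n, ediam (t n) * ENNReal.ofReal L ^ k ≤ ENNReal.ofReal δ := fun n =>
    (ENNReal.le_div_iff_mul_le (Or.inl hLk0) (Or.inl hLktop)).1 (hdiam n)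
  have hsmall : ∀ n, ediam (t n) ≤ ENNReal.ofReal δ := fun n =>
    (le_mul_of_one_le_right' (one_le_pow₀ (by simpa using hL.le))).trans (hscaled n)
  calc mPre T U C (s * Real.log L) k
      ≤ ∑' n, expWeight (s * Real.log L) (bowenN T U (t n)) :=
        mPre_le_tsum hC hcov fun n => exists_mem_dynRefine_subset fun i hi =>
          hT.exists_mem_image_iterate_subset (by simpa using hL.le) hδ (hscaled n) hi.le
    _ ≤ ∑' n, c * ediam (t n) ^ s :=
        ENNReal.tsum_le_tsum fun n => expWeight_bowenN_le hL hT hδ hs (hsmall n)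
    _ = c * ∑' n, ediam (t n) ^ s := ENNReal.tsum_mul_left
    _ ≤ c * (ε / c) := by gcongr
    _ ≤ 0 + ε := by rw [zero_add]; exact ENNReal.mul_div_le

theorem mBowen_mul_log_eq_zero [CompactSpace X] [MeasurableSpace X] [BorelSpace X] (hL : 1 < L)
    (hT : LipschitzWith L.toNNReal T) (hU : IsFinOpenCover U) {C : Set X} {s : ℝ} (hs : 0 < s)
    (hCs : μH[s] C = 0) : mBowen T U C (s * Real.log L) = 0 := by
  have hlam : 0 < s * Real.log L := mul_pos hs (Real.log_pos hL)
  refine ENNReal.iSup_eq_zero.2 fun k => ?_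
  rcases C.eq_empty_or_nonempty with rfl | hC
  · simp [mPre, hlam.not_gt, hlam.ne']
  have : Nonempty X := ⟨hC.some⟩
  obtain ⟨δ, hδ0, hδ⟩ := exists_forall_ediam_le_subset_of_sUnion_eq_univ hU.1 hU.2
  exact mPre_mul_log_eq_zero hL hT hδ0 hδ hC hs hCs k

theorem bowenEntropy_le_of_dimH_lt [CompactSpace X] (hL : 1 < L)
    (hT : LipschitzWith L.toNNReal T) {C : Set X} {s : ℝ} (hCs : dimH C < ENNReal.ofReal s) :
    bowenEntropy T C ≤ ((s * Real.log L : ℝ) : EReal) := by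
  borelize X
  have hs : 0 < s := ENNReal.ofReal_pos.1 (hCs.trans_le' zero_le)
  have hμ : μH[s] C = 0 := by
    simpa [Real.coe_toNNReal _ hs.le] using hausdorffMeasure_of_dimH_lt (d := s.toNNReal) hCs
  refine iSup₂_le fun U hU => ?_
  rw [bowenEntropyOf]
  exact iInf₂_le_of_le _ (mBowen_mul_log_eq_zero hL hT hU hs hμ) le_rfl

end Lipschitz

/-- If `T` is Lipschitz with constant `L > 1` then `H_d(C) ≥ h^B(T, C) / log L`
for every subset `C`. -/
theorem bowenEntropy_le_dimH_mul_log {X : Type*} [MetricSpace X] [CompactSpace X]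
    (T : X ≃ₜ X) (L : ℝ) (hL : 1 < L)
    (hLip : ∀ x y : X, dist (T x) (T y) ≤ L * dist x y) (C : Set X) :
    bowenEntropy (⇑T) C ≤ (dimH C : EReal) * ((Real.log L : ℝ) : EReal) :=
  EReal.le_coe_ennreal_mul_of_forall_lt (Real.log_pos hL) fun _ hs =>
    bowenEntropy_le_of_dimH_lt hL (LipschitzWith.of_dist_le' hLip) hs

end Lowering
end
end

section
/- Let (X,T) be a topological dynamical system with metric d. If there exist ε > 0 and L > 1 such that d(Tx,Ty) ≥ L·d(x,y) whenever d(x,y) < ε, then for every subset C ⊆ X the Hausdorff dimension satisfies H_d(C) ≤ h^B(T,C)/log L. -/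
open Set Filter MeasureTheory
open scoped Classical ENNReal

noncomputable section

namespace Lowering

variable {X : Type*} [TopologicalSpace X]

/-!
Fix a finite open cover `U` by sets of diameter at most `δ < ε`. If `E` lies in a member of
`⋁_{i ≤ n} T⁻ⁱ U`, the first `n + 1` iterates of `E` stay `δ`-small, so local expansion gives
`diam E ≤ δ / Lⁿ`; hence `(diam E)^s ≤ (δ L)^s · exp (-s log L · n_{T,U}(E))`. The sums defining
`m_{T,U}(C, λ)` therefore dominate, up to a constant, the Hausdorff sums in exponent
`s = λ / log L` over covers of vanishing mesh, so `m_{T,U}(C, λ) = 0` forces `μH[s] C = 0` and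
`dimH C ≤ λ / log L`.
-/

section Bowen

variable {Y : Type*} {T : Y → Y} {U : Finset (Set Y)} {E : Set Y}

lemma exists_image_iterate_subset_of_le_bowenN {n : ℕ} (h : (n : ℕ∞) ≤ bowenN T U E) :
    ∀ i < n, ∃ u ∈ U, T^[i] '' E ⊆ u := by
  by_contra! hfail
  obtain ⟨i, hin, hi⟩ := hfail
  -- an admissible length `j > i` would make `i` admissible
  have hle : bowenN T U E ≤ i := by
    refine iSup₂_le fun j hj => ?_
    by_contra! hij
    obtain ⟨u, hu, hsub⟩ := hj i (by exact_mod_cast hij)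
    exact hi u hu hsub
  exact absurd (h.trans hle) (by exact_mod_cast hin.not_ge)

lemma le_bowenN_of_subset_mem_dynRefine {k : ℕ} {V : Set Y} (hV : V ∈ dynRefine T (↑U) k)
    (hE : E ⊆ V) : (k : ℕ∞) ≤ bowenN T U E := by
  obtain ⟨f, hf, rfl⟩ := hV
  refine le_iSup₂ (f := fun (j : ℕ) (_ : j ∈ {j : ℕ | ∀ i < j, ∃ u ∈ U, T^[i] '' E ⊆ u}) =>
    (j : ℕ∞)) k fun i hi => ⟨f i, hf i hi, ?_⟩
  rintro _ ⟨z, hz, rfl⟩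
  exact Set.mem_iInter₂.1 (hE hz) i (Finset.mem_range.2 hi)

lemma one_le_expWeight {lam : ℝ} (hlam : lam ≤ 0) (n : ℕ∞) : 1 ≤ expWeight lam n := by
  unfold expWeight
  split_ifs with htop hpos hneg
  · exact absurd hpos hlam.not_gt
  · exact le_top
  · exact le_rfl
  · rw [ENNReal.one_le_ofReal]
    exact Real.one_le_exp (mul_nonneg (neg_nonneg.2 hlam) (Nat.cast_nonneg _))

lemma expWeight_natCast (lam : ℝ) (m : ℕ) :
    expWeight lam m = ENNReal.ofReal (Real.exp (-lam * m)) := by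
  rw [expWeight, dif_neg (ENat.natCast_ne_top m)]
  rfl

lemma pos_of_mBowen_eq_zero {C : Set Y} {lam : ℝ} (hm : mBowen T U C lam = 0) : 0 < lam := by
  have h0 : mPre T U C lam 0 = 0 := ENNReal.iSup_eq_zero.1 hm 0
  by_contra! hlam
  rcases C.eq_empty_or_nonempty with rfl | ⟨x, hx⟩
  · rcases hlam.lt_or_eq with hneg | rfl <;> simp_all [mPre]
  · -- every admissible cover has a member, and every weight is at least `1`
    have h1 : 1 ≤ mPre T U C lam 0 := by
      rw [mPre, if_neg (Set.nonempty_of_mem hx).ne_empty]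
      refine le_iInf₂ fun 𝓔 _ => le_iInf₂ fun hcov _ => ?_
      obtain ⟨E, hE, -⟩ := hcov hx
      exact (one_le_expWeight hlam _).trans (ENNReal.le_tsum (⟨E, hE⟩ : 𝓔))
    simp [h0] at h1

end Bowen

lemma rpow_div_pow_eq_mul_exp {r L : ℝ} (hr : 0 ≤ r) (hL : 0 < L) (s : ℝ) (n : ℕ) :
    (r / L ^ n) ^ s = (r * L) ^ s * Real.exp (-(s * Real.log L) * (n + 1 : ℕ)) := by
  have hpow : 0 < L ^ (n + 1) := pow_pos hL _
  have hdiv : r / L ^ n = r * L / L ^ (n + 1) := by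
    field_simp
    ring
  have hexp : (L ^ (n + 1)) ^ s = Real.exp (s * Real.log L * (n + 1 : ℕ)) := by
    rw [Real.rpow_def_of_pos hpow, Real.log_pow]
    ring_nf
  rw [hdiv, Real.div_rpow (by positivity) hpow.le, hexp, neg_mul, Real.exp_neg, div_eq_mul_inv]

lemma tendsto_ofReal_div_pow_atTop (δ : ℝ) {L : ℝ} (hL : 1 < L) :
    Tendsto (fun n : ℕ => ENNReal.ofReal (δ / L ^ n)) atTop (nhds 0) := by
  simpa using ENNReal.tendsto_ofReal
    (tendsto_const_nhds.div_atTop (tendsto_pow_atTop_atTop_of_one_lt hL))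

lemma dimH_le_of_forall_countable_cover {Y : Type*} [EMetricSpace Y] {C : Set Y} {s : ℝ}
    (hs : 0 ≤ s) {r : ℕ → ℝ≥0∞} (hr : Tendsto r atTop (nhds 0))
    (hcov : ∀ k, ∀ η : ℝ≥0∞, 0 < η → ∃ 𝓔 : Set (Set Y), 𝓔.Countable ∧ C ⊆ ⋃₀ 𝓔 ∧
      (∀ E ∈ 𝓔, Metric.ediam E ≤ r k) ∧ ∑' E : 𝓔, Metric.ediam (E : Set Y) ^ s ≤ η) :
    dimH C ≤ ENNReal.ofReal s := by
  borelize Y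
  have hzero : μH[s] C = 0 := by
    refine le_antisymm (ENNReal.le_of_forall_pos_le_add fun η hη _ => ?_) zero_le
    choose 𝓔 hcount hcover hdiam hsum using fun k => hcov k η (by exact_mod_cast hη)
    have := fun k => (hcount k).to_subtype
    calc μH[s] C ≤ liminf (fun k => ∑' E : 𝓔 k, Metric.ediam (E : Set Y) ^ s) atTop :=
          Measure.hausdorffMeasure_le_liminf_tsum s C r hr (fun k (E : 𝓔 k) => (E : Set Y))
            (Eventually.of_forall fun k E => hdiam k E E.2)
            (Eventually.of_forall fun k => (hcover k).trans_eq sUnion_eq_iUnion)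
      _ ≤ η := liminf_le_of_frequently_le' (Frequently.of_forall hsum)
      _ = 0 + η := (zero_add _).symm
  refine dimH_le_of_hausdorffMeasure_ne_top (d := s.toNNReal) ?_
  rw [Real.coe_toNNReal s hs, hzero]
  exact ENNReal.zero_ne_top

section Expanding

variable {Y : Type*} [MetricSpace Y]

def IsLocallyExpanding (T : Y → Y) (ε L : ℝ) : Prop :=
  ∀ x y : Y, dist x y < ε → L * dist x y ≤ dist (T x) (T y)

variable {T : Y → Y} {ε L δ : ℝ} {U : Finset (Set Y)} {E : Set Y}

lemma IsLocallyExpanding.pow_mul_dist_le_dist_iterate (hT : IsLocallyExpanding T ε L)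
    (hL : 0 ≤ L) {x y : Y} {n : ℕ} (h : ∀ i < n, dist (T^[i] x) (T^[i] y) < ε) :
    L ^ n * dist x y ≤ dist (T^[n] x) (T^[n] y) := by
  induction n with
  | zero => simp
  | succ n ih =>
    rw [Function.iterate_succ_apply', Function.iterate_succ_apply']
    calc L ^ (n + 1) * dist x y = L * (L ^ n * dist x y) := by ring
      _ ≤ L * dist (T^[n] x) (T^[n] y) :=
        mul_le_mul_of_nonneg_left (ih fun i hi => h i (by omega)) hL
      _ ≤ _ := hT _ _ (h n n.lt_succ_self)

lemma IsLocallyExpanding.ediam_le_of_succ_le_bowenN (hT : IsLocallyExpanding T ε L)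
    (hL : 0 < L) (hδε : δ < ε) (hU : ∀ u ∈ U, ∀ a ∈ u, ∀ b ∈ u, dist a b ≤ δ) {n : ℕ}
    (hn : ((n + 1 : ℕ) : ℕ∞) ≤ bowenN T U E) : Metric.ediam E ≤ ENNReal.ofReal (δ / L ^ n) := by
  refine Metric.ediam_le fun x hx y hy => ?_
  have horbit : ∀ i < n + 1, dist (T^[i] x) (T^[i] y) ≤ δ := fun i hi => by
    obtain ⟨u, hu, hsub⟩ := exists_image_iterate_subset_of_le_bowenN hn i hi
    exact hU u hu _ (hsub ⟨x, hx, rfl⟩) _ (hsub ⟨y, hy, rfl⟩)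
  have hexpand := hT.pow_mul_dist_le_dist_iterate hL.le (x := x) (y := y) (n := n)
    fun i hi => (horbit i (by omega)).trans_lt hδε
  rw [edist_dist]
  exact ENNReal.ofReal_le_ofReal
    ((le_div_iff₀' (pow_pos hL n)).2 (hexpand.trans (horbit n n.lt_succ_self)))

lemma IsLocallyExpanding.ediam_eq_zero_of_bowenN_eq_top (hT : IsLocallyExpanding T ε L)
    (hL : 1 < L) (hδε : δ < ε) (hU : ∀ u ∈ U, ∀ a ∈ u, ∀ b ∈ u, dist a b ≤ δ)
    (htop : bowenN T U E = ⊤) : Metric.ediam E = 0 :=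
  le_antisymm (ge_of_tendsto' (tendsto_ofReal_div_pow_atTop δ hL) fun n =>
    hT.ediam_le_of_succ_le_bowenN (by linarith) hδε hU (htop ▸ le_top)) zero_le

lemma IsLocallyExpanding.ediam_rpow_le_mul_expWeight (hT : IsLocallyExpanding T ε L)
    (hL : 1 < L) (hδ : 0 ≤ δ) (hδε : δ < ε) (hU : ∀ u ∈ U, ∀ a ∈ u, ∀ b ∈ u, dist a b ≤ δ)
    {s : ℝ} (hs : 0 < s) (hE : 1 ≤ bowenN T U E) :
    Metric.ediam E ^ s ≤
      ENNReal.ofReal ((δ * L) ^ s) * expWeight (s * Real.log L) (bowenN T U E) := by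
  rcases eq_or_ne (bowenN T U E) ⊤ with htop | hfin
  · rw [hT.ediam_eq_zero_of_bowenN_eq_top hL hδε hU htop, ENNReal.zero_rpow_of_pos hs]
    exact zero_le
  obtain ⟨m, hm⟩ := ENat.ne_top_iff_exists.1 hfin
  obtain ⟨n, rfl⟩ : ∃ n, m = n + 1 :=
    Nat.exists_eq_add_of_le' (by rw [← hm] at hE; exact_mod_cast hE)
  have hL0 : 0 < L := by linarith
  calc Metric.ediam E ^ s ≤ ENNReal.ofReal (δ / L ^ n) ^ s :=
        ENNReal.rpow_le_rpow (hT.ediam_le_of_succ_le_bowenN hL0 hδε hU hm.le) hs.le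
    _ = ENNReal.ofReal ((δ * L) ^ s * Real.exp (-(s * Real.log L) * (n + 1 : ℕ))) := by
        rw [ENNReal.ofReal_rpow_of_nonneg (by positivity) hs.le,
          rpow_div_pow_eq_mul_exp hδ hL0]
    _ = _ := by
        rw [ENNReal.ofReal_mul (by positivity), ← hm, expWeight_natCast]

lemma IsLocallyExpanding.dimH_le_of_mBowen_eq_zero (hT : IsLocallyExpanding T ε L)
    (hL : 1 < L) (hδ : 0 ≤ δ) (hδε : δ < ε) (hU : ∀ u ∈ U, ∀ a ∈ u, ∀ b ∈ u, dist a b ≤ δ)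
    {C : Set Y} {lam : ℝ} (hm : mBowen T U C lam = 0) :
    dimH C ≤ ENNReal.ofReal (lam / Real.log L) := by
  rcases C.eq_empty_or_nonempty with rfl | hC
  · simp
  have hlogL : 0 < Real.log L := Real.log_pos hL
  have hs : 0 < lam / Real.log L := div_pos (pos_of_mBowen_eq_zero hm) hlogL
  set c := ENNReal.ofReal ((δ * L) ^ (lam / Real.log L))
  refine dimH_le_of_forall_countable_cover hs.le (tendsto_ofReal_div_pow_atTop δ hL)
    fun k η hη => ?_
  have hsmall : mPre T U C lam (k + 1) < η / c :=
    (ENNReal.iSup_eq_zero.1 hm (k + 1)).trans_lt (ENNReal.div_pos hη.ne' ENNReal.ofReal_ne_top)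
  rw [mPre, if_neg hC.ne_empty] at hsmall
  simp only [iInf_lt_iff] at hsmall
  obtain ⟨𝓔, hcount, hcover, hrefine, hsum⟩ := hsmall
  have hbowen : ∀ E ∈ 𝓔, ((k + 1 : ℕ) : ℕ∞) ≤ bowenN T U E := fun E hE => by
    obtain ⟨V, hV, hEV⟩ := hrefine E hE
    exact le_bowenN_of_subset_mem_dynRefine hV hEV
  refine ⟨𝓔, hcount, hcover,
    fun E hE => hT.ediam_le_of_succ_le_bowenN (by linarith) hδε hU (hbowen E hE), ?_⟩
  calc ∑' E : 𝓔, Metric.ediam (E : Set Y) ^ (lam / Real.log L)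
      ≤ ∑' E : 𝓔, c * expWeight lam (bowenN T U E) := ENNReal.tsum_le_tsum fun E => by
        have h1 : 1 ≤ bowenN T U E := le_trans (by norm_num) (hbowen E E.2)
        simpa only [div_mul_cancel₀ _ hlogL.ne'] using
          hT.ediam_rpow_le_mul_expWeight hL hδ hδε hU hs h1
    _ = c * ∑' E : 𝓔, expWeight lam (bowenN T U E) := ENNReal.tsum_mul_left
    _ ≤ c * (η / c) := by gcongr
    _ ≤ η := ENNReal.mul_div_le

lemma IsLocallyExpanding.dimH_mul_log_le_bowenEntropyOf (hT : IsLocallyExpanding T ε L)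
    (hL : 1 < L) (hδ : 0 ≤ δ) (hδε : δ < ε) (hU : ∀ u ∈ U, ∀ a ∈ u, ∀ b ∈ u, dist a b ≤ δ)
    (C : Set Y) : (dimH C : EReal) * (Real.log L : EReal) ≤ bowenEntropyOf T U C := by
  refine le_iInf₂ fun lam hm => ?_
  have hlogL : 0 < Real.log L := Real.log_pos hL
  have hs : 0 < lam / Real.log L := div_pos (pos_of_mBowen_eq_zero hm) hlogL
  calc (dimH C : EReal) * (Real.log L : EReal)
      ≤ (ENNReal.ofReal (lam / Real.log L) : EReal) * (Real.log L : EReal) :=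
        mul_le_mul_of_nonneg_right (EReal.coe_ennreal_le_coe_ennreal_iff.2
          (hT.dimH_le_of_mBowen_eq_zero hL hδ hδε hU hm)) (EReal.coe_nonneg.2 hlogL.le)
    _ = lam := by
        rw [EReal.coe_ennreal_ofReal, max_eq_left hs.le, ← EReal.coe_mul,
          div_mul_cancel₀ _ hlogL.ne']

end Expanding

lemma exists_isFinOpenCover_dist_le {Y : Type*} [MetricSpace Y] [CompactSpace Y] {δ : ℝ}
    (hδ : 0 < δ) :
    ∃ U : Finset (Set Y), IsFinOpenCover U ∧ ∀ u ∈ U, ∀ a ∈ u, ∀ b ∈ u, dist a b ≤ δ := by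
  obtain ⟨t, -, ht, hcover⟩ := finite_cover_balls_of_compact (isCompact_univ (X := Y))
    (half_pos hδ)
  refine ⟨ht.toFinset.image (Metric.ball · (δ / 2)), ⟨?_, ?_⟩, ?_⟩
  · simp only [Finset.mem_image, Finite.mem_toFinset]
    rintro _ ⟨x, -, rfl⟩
    exact Metric.isOpen_ball
  · simpa [eq_univ_iff_forall, sUnion_image] using hcover
  · simp only [Finset.mem_image, Finite.mem_toFinset]
    rintro _ ⟨x, -, rfl⟩ a ha b hb
    linarith [dist_triangle_right a b x, Metric.mem_ball.1 ha, Metric.mem_ball.1 hb]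

/-- If `d(Tx, Ty) ≥ L d(x, y)` whenever `d(x, y) < ε`, with `ε > 0`, `L > 1`, then
`H_d(C) ≤ h^B(T, C) / log L` for every subset `C`. -/
theorem dimH_mul_log_le_bowenEntropy {X : Type*} [MetricSpace X] [CompactSpace X]
    (T : X ≃ₜ X) (ε L : ℝ) (hε : 0 < ε) (hL : 1 < L)
    (hExp : ∀ x y : X, dist x y < ε → L * dist x y ≤ dist (T x) (T y)) (C : Set X) :
    (dimH C : EReal) * ((Real.log L : ℝ) : EReal) ≤ bowenEntropy (⇑T) C := by
  have hT : IsLocallyExpanding T ε L := hExp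
  obtain ⟨U, hU, hUδ⟩ := exists_isFinOpenCover_dist_le (Y := X) (half_pos hε)
  exact (hT.dimH_mul_log_le_bowenEntropyOf hL (half_pos hε).le (half_lt_self hε) hUδ C).trans
      (le_iSup₂ (f := fun V (_ : IsFinOpenCover V) => bowenEntropyOf T V C) U hU)

end Lowering
end
end

section
/- Let (X,T) be a topological dynamical system with finite topological entropy and K ⊆ X compact. If h(T,K) > h*(T,X), then for each real number h with 0 ≤ h ≤ h(T,K) − h*(T,X), the closure of the set {h(T,K') : K' ⊆ K compact} has nonempty intersection with the interval [h, h + h*(T,X)]. -/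
open Set Filter MeasureTheory
open scoped Classical ENNReal

noncomputable section

namespace Lowering

variable {X : Type*} [TopologicalSpace X]

/-!
Fix `δ > 0` and put `θ = h - δ`. Since `h*(T, X) = c`, some finite open cover `W` satisfies
`h(T, E) ≤ h_W(T, E) + c + δ/2` for every `E`, so `h_W(T, K) > θ`. Starting from `K`, one
repeatedly takes a compact piece `E` with `h_W(T, E) > θ` lying in a single cell of `W_0^{ν-1}`,
waits for the first time `m > ν` at which `N(W_0^{m-1}, E) ≥ e^{θm}`, and harvests `⌈e^{θm}⌉`
points of `E` that are `(m, λ)`-separated (`λ` a Lebesgue number of `W`), together with their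
closed shadows `E ∩ Φ_λ(x)`, each of which lies in a single cell of every `W_0^{n-1}`. The limit
`K'` of this construction contains all harvested points, whence `h(T, K') ≥ θ`, while
`N(W_0^{n-1}, K') ≤ 3n e^{θn}`, whence `h_W(T, K') ≤ θ` and `h(T, K') ≤ θ + c + δ/2`.
Letting `δ → 0` gives a point of the closure in `[h, h + c]`.
-/

open Real

theorem limsup_coe_le_of_forall_eventually_le {u : ℕ → ℝ} {b : ℝ}
    (h : ∀ η > 0, ∀ᶠ n in atTop, u n ≤ b + η) : atTop.limsup (fun n => (u n : EReal)) ≤ b :=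
  EReal.le_of_forall_lt_iff_le.1 fun z hz => by
    have hbz : b < z := EReal.coe_lt_coe_iff.1 hz
    refine limsup_le_of_le (by isBoundedDefault) ((h (z - b) (by linarith)).mono fun n hn => ?_)
    exact EReal.coe_le_coe_iff.2 (by linarith)

theorem limsup_coe_add_le_of_tendsto_zero {u v : ℕ → ℝ} (hv : Tendsto v atTop (nhds 0)) :
    atTop.limsup (fun n => ((v n + u n : ℝ) : EReal)) ≤ atTop.limsup (fun n => (u n : EReal)) := by
  have hv' : atTop.limsup (fun n => (v n : EReal)) = 0 := (EReal.tendsto_coe.2 hv).limsup_eq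
  simp_rw [EReal.coe_add]
  refine (EReal.limsup_add_le ?_ ?_).trans_eq ?_ <;> simp [hv']

section CoverNum

variable {X : Type*}

def HasFiniteSubcover (V : Set (Set X)) : Prop :=
  ∃ F : Finset (Set X), ↑F ⊆ V ∧ univ ⊆ ⋃₀ (F : Set (Set X))

@[simp]
theorem coverNum_empty (V : Set (Set X)) : coverNum V ∅ = 1 :=
  if_pos rfl

theorem coverNum_le {V : Set (Set X)} {K : Set X} {F : Finset (Set X)} {k : ℕ} (hFV : ↑F ⊆ V)
    (hKF : K ⊆ ⋃₀ (F : Set (Set X))) (hFk : F.card ≤ k) (hk : 1 ≤ k) : coverNum V K ≤ k := by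
  unfold coverNum
  split_ifs
  · exact hk
  · refine (Nat.sInf_le ?_).trans hFk
    exact ⟨F, hFV, hKF, rfl⟩

theorem exists_finset_card_le_coverNum {V : Set (Set X)} (hV : HasFiniteSubcover V) (K : Set X) :
    ∃ F : Finset (Set X), ↑F ⊆ V ∧ K ⊆ ⋃₀ (F : Set (Set X)) ∧ F.card ≤ coverNum V K := by
  by_cases hK : K = ∅
  · exact ⟨∅, by simp, by simp [hK], by simp⟩
  obtain ⟨F₀, hF₀V, hF₀⟩ := hV
  have hne : {n | ∃ F : Finset (Set X), ↑F ⊆ V ∧ K ⊆ ⋃₀ (F : Set (Set X)) ∧ F.card = n}.Nonempty :=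
    ⟨F₀.card, F₀, hF₀V, (subset_univ K).trans hF₀, rfl⟩
  obtain ⟨F, hFV, hKF, hF⟩ := Nat.sInf_mem hne
  exact ⟨F, hFV, hKF, by rw [coverNum, if_neg hK, hF]⟩

theorem one_le_coverNum {V : Set (Set X)} (hV : HasFiniteSubcover V) (K : Set X) :
    1 ≤ coverNum V K := by
  obtain rfl | ⟨x, hx⟩ := K.eq_empty_or_nonempty
  · simp
  obtain ⟨F, -, hKF, hF⟩ := exists_finset_card_le_coverNum hV K
  obtain ⟨v, hv, -⟩ := hKF hx
  exact (Finset.card_pos.2 ⟨v, hv⟩).trans_le hF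

theorem coverNum_le_one {V : Set (Set X)} {K v : Set X} (hv : v ∈ V) (hKv : K ⊆ v) :
    coverNum V K ≤ 1 :=
  coverNum_le (F := {v}) (by simpa using hv) (by simpa using hKv) (by simp) le_rfl

theorem coverNum_mono {V : Set (Set X)} (hV : HasFiniteSubcover V) {K L : Set X} (hKL : K ⊆ L) :
    coverNum V K ≤ coverNum V L := by
  obtain ⟨F, hFV, hLF, hF⟩ := exists_finset_card_le_coverNum hV L
  exact coverNum_le hFV (hKL.trans hLF) hF (one_le_coverNum hV L)

theorem coverNum_union_le {V : Set (Set X)} (hV : HasFiniteSubcover V) (K L : Set X) :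
    coverNum V (K ∪ L) ≤ coverNum V K + coverNum V L := by
  obtain ⟨F, hFV, hKF, hF⟩ := exists_finset_card_le_coverNum hV K
  obtain ⟨G, hGV, hLG, hG⟩ := exists_finset_card_le_coverNum hV L
  refine coverNum_le (F := F ∪ G) ?_ ?_ ((Finset.card_union_le F G).trans (add_le_add hF hG)) ?_
  · rw [Finset.coe_union]
    exact union_subset hFV hGV
  · rw [Finset.coe_union, sUnion_union]
    exact union_subset_union hKF hLG
  · exact (one_le_coverNum hV K).trans (Nat.le_add_right _ _)

theorem coverNum_biUnion_le {V : Set (Set X)} (hV : HasFiniteSubcover V) {ι : Type*}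
    {s : Finset ι} (hs : s.Nonempty) (f : ι → Set X) :
    coverNum V (⋃ i ∈ s, f i) ≤ ∑ i ∈ s, coverNum V (f i) := by
  induction hs using Finset.Nonempty.cons_induction with
  | singleton i => simp
  | cons i s hi hs ih =>
    rw [Finset.cons_eq_insert, Finset.set_biUnion_insert, Finset.sum_insert hi]
    exact (coverNum_union_le hV _ _).trans (Nat.add_le_add_left ih _)

theorem coverNum_le_card_of_subset_biUnion {V : Set (Set X)} (hV : HasFiniteSubcover V)
    {ι : Type*} {s : Finset ι} (hs : s.Nonempty) {f : ι → Set X} {K : Set X}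
    (hK : K ⊆ ⋃ i ∈ s, f i) (hf : ∀ i ∈ s, ∃ v ∈ V, f i ⊆ v) : coverNum V K ≤ s.card :=
  calc coverNum V K ≤ ∑ i ∈ s, coverNum V (f i) :=
        (coverNum_mono hV hK).trans (coverNum_biUnion_le hV hs f)
    _ ≤ ∑ _i ∈ s, 1 := Finset.sum_le_sum fun i hi =>
        let ⟨_, hv, hfv⟩ := hf i hi
        coverNum_le_one hv hfv
    _ = s.card := by simp

theorem coverNum_le_coverNum_mul {V V' : Set (Set X)} (hV : HasFiniteSubcover V)
    (hV' : HasFiniteSubcover V') {M : ℕ} (hM : 1 ≤ M) (h : ∀ v ∈ V', coverNum V v ≤ M)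
    (K : Set X) : coverNum V K ≤ coverNum V' K * M := by
  obtain ⟨F, hFV', hKF, hF⟩ := exists_finset_card_le_coverNum hV' K
  choose G hGV hvG hG using exists_finset_card_le_coverNum hV
  refine coverNum_le (F := F.biUnion G) ?_ ?_ ?_
    (by simpa using Nat.mul_le_mul (one_le_coverNum hV' K) hM)
  · intro u hu
    obtain ⟨v, -, hu⟩ := Finset.mem_biUnion.1 hu
    exact hGV v hu
  · intro x hx
    obtain ⟨v, hvF, hxv⟩ := hKF hx
    obtain ⟨u, huG, hxu⟩ := hvG v hxv
    exact ⟨u, Finset.mem_biUnion.2 ⟨v, hvF, huG⟩, hxu⟩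
  · calc (F.biUnion G).card ≤ ∑ v ∈ F, (G v).card := Finset.card_biUnion_le
      _ ≤ ∑ _v ∈ F, M := Finset.sum_le_sum fun v hv => (hG v).trans (h v (hFV' hv))
      _ = F.card * M := by simp
      _ ≤ coverNum V' K * M := Nat.mul_le_mul_right M hF

theorem card_le_coverNum {V : Set (Set X)} (hV : HasFiniteSubcover V) {K : Set X} {Q : Finset X}
    (hQK : ↑Q ⊆ K) (hQ : ∀ v ∈ V, ∀ p ∈ Q, ∀ q ∈ Q, p ∈ v → q ∈ v → p = q) :
    Q.card ≤ coverNum V K := by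
  obtain ⟨F, hFV, hKF, hF⟩ := exists_finset_card_le_coverNum hV K
  refine (Finset.card_le_card_of_forall_subsingleton (· ∈ ·) (fun p hp => hKF (hQK hp))
    fun v hv p hp q hq => hQ v (hFV hv) p hp.1 q hq.1 hp.2 hq.2).trans hF

end CoverNum

section DynRefine

variable {X : Type*} {T : X → X}

theorem biInter_range_add_preimage (T : X → X) (f : ℕ → Set X) (n m : ℕ) :
    ⋂ i ∈ Finset.range (n + m), T^[i] ⁻¹' f i =
      (⋂ i ∈ Finset.range n, T^[i] ⁻¹' f i) ∩
        T^[n] ⁻¹' ⋂ j ∈ Finset.range m, T^[j] ⁻¹' f (n + j) := by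
  ext x
  simp only [mem_iInter, Finset.mem_range, mem_inter_iff, mem_preimage,
    ← Function.iterate_add_apply]
  constructor
  · intro h
    exact ⟨fun i hi => h i (by omega), fun j hj => add_comm n j ▸ h (n + j) (by omega)⟩
  · rintro ⟨h₁, h₂⟩ i hi
    rcases lt_or_ge i n with hin | hin
    · exact h₁ i hin
    · obtain ⟨j, rfl⟩ := Nat.exists_eq_add_of_le hin
      exact add_comm j n ▸ h₂ j (by omega)

theorem univ_mem_dynRefine_zero (T : X → X) (U : Set (Set X)) : univ ∈ dynRefine T U 0 :=
  ⟨fun _ => univ, by simp, by simp⟩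

theorem mem_dynRefine_one {U : Set (Set X)} {u : Set X} (hu : u ∈ U) : u ∈ dynRefine T U 1 :=
  ⟨fun _ => u, fun _ _ => hu, by simp⟩

theorem mem_dynRefine_add {U : Set (Set X)} {n m : ℕ} {A B : Set X} (hA : A ∈ dynRefine T U n)
    (hB : B ∈ dynRefine T U m) : A ∩ T^[n] ⁻¹' B ∈ dynRefine T U (n + m) := by
  obtain ⟨f, hf, rfl⟩ := hA
  obtain ⟨g, hg, rfl⟩ := hB
  refine ⟨fun i => if i < n then f i else g (i - n), fun i hi => ?_, ?_⟩
  · dsimp only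
    split_ifs with h
    exacts [hf i h, hg _ (by omega)]
  · rw [biInter_range_add_preimage]
    congr 1
    · exact iInter₂_congr fun i hi => by rw [if_pos (Finset.mem_range.1 hi)]
    · exact congrArg _ (iInter₂_congr fun j _ => by simp)

theorem exists_eq_inter_preimage_of_mem_dynRefine_add {U : Set (Set X)} {n m : ℕ} {V : Set X}
    (hV : V ∈ dynRefine T U (n + m)) :
    ∃ A ∈ dynRefine T U n, ∃ B ∈ dynRefine T U m, V = A ∩ T^[n] ⁻¹' B := by
  obtain ⟨f, hf, rfl⟩ := hV
  exact ⟨_, ⟨f, fun i hi => hf i (by omega), rfl⟩,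
    _, ⟨fun j => f (n + j), fun j hj => hf _ (by omega), rfl⟩, biInter_range_add_preimage T f n m⟩

theorem exists_mem_dynRefine_superset {U : Set (Set X)} {n : ℕ} {E : Set X}
    (h : ∀ i < n, ∃ u ∈ U, MapsTo T^[i] E u) : ∃ V ∈ dynRefine T U n, E ⊆ V := by
  choose! u huU hEu using h
  exact ⟨_, ⟨u, huU, rfl⟩, fun x hx => mem_iInter₂.2 fun i hi => hEu i (Finset.mem_range.1 hi) hx⟩

theorem exists_superset_mem_dynRefine_of_le {U : Set (Set X)} {n m : ℕ} (hnm : n ≤ m) {V : Set X}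
    (hV : V ∈ dynRefine T U m) : ∃ V' ∈ dynRefine T U n, V ⊆ V' := by
  obtain ⟨f, hf, rfl⟩ := hV
  exact exists_mem_dynRefine_superset fun i hi =>
    ⟨f i, hf i (hi.trans_le hnm), fun _ hx =>
      mem_iInter₂.1 hx i (Finset.mem_range.2 (hi.trans_le hnm))⟩

theorem hasFiniteSubcover_dynRefine (T : X → X) {U : Finset (Set X)}
    (hU : ⋃₀ (U : Set (Set X)) = univ) : ∀ n, HasFiniteSubcover (dynRefine T (↑U) n)
  | 0 => ⟨{univ}, by simpa using univ_mem_dynRefine_zero T (↑U : Set (Set X)), by simp⟩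
  | n + 1 => by
    obtain ⟨F, hF, hFcov⟩ := hasFiniteSubcover_dynRefine T hU n
    refine ⟨(F ×ˢ U).image fun p => p.1 ∩ T^[n] ⁻¹' p.2, ?_, fun x _ => ?_⟩
    · intro V hV
      obtain ⟨⟨A, u⟩, hAu, rfl⟩ := Finset.mem_image.1 hV
      obtain ⟨hA, hu⟩ := Finset.mem_product.1 hAu
      exact mem_dynRefine_add (hF hA) (mem_dynRefine_one hu)
    · obtain ⟨A, hA, hxA⟩ := hFcov (mem_univ x)
      obtain ⟨u, hu, hxu⟩ : T^[n] x ∈ ⋃₀ (U : Set (Set X)) := hU ▸ mem_univ _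
      exact ⟨_, Finset.mem_image.2 ⟨(A, u), Finset.mem_product.2 ⟨hA, hu⟩, rfl⟩, hxA, hxu⟩

theorem coverNum_dynRefine_mono (T : X → X) {U : Finset (Set X)} (hU : ⋃₀ (U : Set (Set X)) = univ)
    {n m : ℕ} (hnm : n ≤ m) (E : Set X) :
    coverNum (dynRefine T (↑U) n) E ≤ coverNum (dynRefine T (↑U) m) E := by
  simpa using coverNum_le_coverNum_mul (hasFiniteSubcover_dynRefine T hU n)
    (hasFiniteSubcover_dynRefine T hU m) le_rfl (fun v hv =>
      let ⟨_, hv', hvv'⟩ := exists_superset_mem_dynRefine_of_le hnm hv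
      coverNum_le_one hv' hvv') E

theorem coverNum_inter_preimage_le (T : X → X) {U : Finset (Set X)}
    (hU : ⋃₀ (U : Set (Set X)) = univ) (n m : ℕ) (A B : Set X) :
    coverNum (dynRefine T (↑U) (n + m)) (A ∩ T^[n] ⁻¹' B) ≤
      coverNum (dynRefine T (↑U) n) A * coverNum (dynRefine T (↑U) m) B := by
  obtain ⟨F, hFU, hAF, hF⟩ := exists_finset_card_le_coverNum (hasFiniteSubcover_dynRefine T hU n) A
  obtain ⟨G, hGU, hBG, hG⟩ := exists_finset_card_le_coverNum (hasFiniteSubcover_dynRefine T hU m) B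
  refine coverNum_le (F := (F ×ˢ G).image fun p => p.1 ∩ T^[n] ⁻¹' p.2) ?_ ?_ ?_ ?_
  · intro V hV
    obtain ⟨⟨a, b⟩, hab, rfl⟩ := Finset.mem_image.1 hV
    obtain ⟨ha, hb⟩ := Finset.mem_product.1 hab
    exact mem_dynRefine_add (hFU ha) (hGU hb)
  · rintro x ⟨hxA, hxB⟩
    obtain ⟨a, ha, hxa⟩ := hAF hxA
    obtain ⟨b, hb, hxb⟩ := hBG hxB
    exact ⟨_, Finset.mem_image.2 ⟨(a, b), Finset.mem_product.2 ⟨ha, hb⟩, rfl⟩, hxa, hxb⟩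
  · exact Finset.card_image_le.trans ((Finset.card_product F G).trans_le (Nat.mul_le_mul hF hG))
  · simpa using Nat.mul_le_mul (one_le_coverNum (hasFiniteSubcover_dynRefine T hU n) A)
      (one_le_coverNum (hasFiniteSubcover_dynRefine T hU m) B)

end DynRefine

section CoverEntropyOf

variable {X : Type*} {T : X → X}

theorem coverEntropyOf_nonneg (T : X → X) (U : Finset (Set X)) (E : Set X) :
    0 ≤ coverEntropyOf T U E :=
  le_limsup_of_frequently_le (Frequently.of_forall fun n =>
    EReal.coe_nonneg.2 (div_nonneg (log_natCast_nonneg _) n.cast_nonneg)) (by isBoundedDefault)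

@[simp]
theorem coverEntropyOf_empty (T : X → X) (U : Finset (Set X)) : coverEntropyOf T U ∅ = 0 := by
  simp [coverEntropyOf]

theorem coverEntropyOf_mono {U : Finset (Set X)} (hU : ⋃₀ (U : Set (Set X)) = univ) {A B : Set X}
    (hAB : A ⊆ B) : coverEntropyOf T U A ≤ coverEntropyOf T U B :=
  limsup_le_limsup (Eventually.of_forall fun n => EReal.coe_le_coe_iff.2 <|
    div_le_div_of_nonneg_right
      (log_le_log (by exact_mod_cast one_le_coverNum (hasFiniteSubcover_dynRefine T hU n) A)
        (by exact_mod_cast coverNum_mono (hasFiniteSubcover_dynRefine T hU n) hAB))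
      n.cast_nonneg)

theorem coverEntropyOf_union_le {U : Finset (Set X)} (hU : ⋃₀ (U : Set (Set X)) = univ)
    (A B : Set X) :
    coverEntropyOf T U (A ∪ B) ≤ max (coverEntropyOf T U A) (coverEntropyOf T U B) := by
  set N : Set X → ℕ → ℕ := fun E n => coverNum (dynRefine T (↑U) n) E
  have key : ∀ n : ℕ, log (N (A ∪ B) n) / n ≤
      log 2 / n + max (log (N A n) / n) (log (N B n) / n) := by
    intro n
    have hV := hasFiniteSubcover_dynRefine T hU n
    have hmax : 1 ≤ max (N A n) (N B n) := le_max_of_le_left (one_le_coverNum hV A)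
    have hle : log (N (A ∪ B) n) / n ≤ log 2 / n + log (max (N A n) (N B n) : ℕ) / n := by
      rw [← add_div, ← log_mul two_ne_zero (by positivity)]
      refine div_le_div_of_nonneg_right (log_le_log ?_ ?_) n.cast_nonneg
      · exact_mod_cast one_le_coverNum hV (A ∪ B)
      · exact_mod_cast (coverNum_union_le hV A B).trans (by simp only [N]; omega)
    rcases max_choice (N A n) (N B n) with h | h <;> rw [h] at hle
    · exact hle.trans (add_le_add le_rfl (le_max_left _ _))
    · exact hle.trans (add_le_add le_rfl (le_max_right _ _))
  calc coverEntropyOf T U (A ∪ B)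
      ≤ atTop.limsup fun n : ℕ =>
          ((log 2 / n + max (log (N A n) / n) (log (N B n) / n) : ℝ) : EReal) :=
        limsup_le_limsup (Eventually.of_forall fun n => EReal.coe_le_coe_iff.2 (key n))
    _ ≤ atTop.limsup fun n : ℕ => ((max (log (N A n) / n) (log (N B n) / n) : ℝ) : EReal) :=
        limsup_coe_add_le_of_tendsto_zero (tendsto_const_div_atTop_nhds_zero_nat _)
    _ = max (coverEntropyOf T U A) (coverEntropyOf T U B) := by
        simp_rw [EReal.coe_strictMono.monotone.map_max]
        exact limsup_max

theorem coverEntropyOf_biUnion_le {U : Finset (Set X)} (hU : ⋃₀ (U : Set (Set X)) = univ)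
    {ι : Type*} {s : Finset ι} (hs : s.Nonempty) (f : ι → Set X) :
    coverEntropyOf T U (⋃ i ∈ s, f i) ≤ s.sup' hs fun i => coverEntropyOf T U (f i) := by
  induction hs using Finset.Nonempty.cons_induction with
  | singleton i => simp
  | cons i s hi hs ih =>
    rw [Finset.sup'_cons hs, Finset.cons_eq_insert, Finset.set_biUnion_insert]
    exact (coverEntropyOf_union_le hU _ _).trans (max_le_max le_rfl ih)

theorem exists_mem_le_coverEntropyOf {U : Finset (Set X)} (hU : ⋃₀ (U : Set (Set X)) = univ)
    {ι : Type*} {s : Finset ι} (hs : s.Nonempty) (f : ι → Set X) {E : Set X}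
    (hE : E ⊆ ⋃ i ∈ s, f i) : ∃ i ∈ s, coverEntropyOf T U E ≤ coverEntropyOf T U (f i) := by
  obtain ⟨i, hi, heq⟩ := Finset.exists_mem_eq_sup' hs fun i => coverEntropyOf T U (f i)
  exact ⟨i, hi,
    (coverEntropyOf_mono hU hE).trans ((coverEntropyOf_biUnion_le hU hs f).trans heq.le)⟩

theorem coverEntropyOf_le_of_coverNum_le {U : Finset (Set X)} (hU : ⋃₀ (U : Set (Set X)) = univ)
    {E : Set X} {C θ : ℝ} (hC : 0 < C)
    (h : ∀ n : ℕ, 0 < n → (coverNum (dynRefine T (↑U) n) E : ℝ) ≤ C * n * exp (θ * n)) :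
    coverEntropyOf T U E ≤ θ := by
  have hlim : Tendsto (fun n : ℕ => log (C * n) / n) atTop (nhds 0) := by
    refine ((tendsto_pow_log_div_mul_add_atTop C⁻¹ 0 1 (inv_ne_zero hC.ne')).comp
      (tendsto_natCast_atTop_atTop.const_mul_atTop hC)).congr fun n => ?_
    simp [hC.ne']
  calc coverEntropyOf T U E ≤ atTop.limsup fun n : ℕ => ((log (C * n) / n + θ : ℝ) : EReal) := by
        refine limsup_le_limsup ((eventually_gt_atTop 0).mono fun n hn => ?_)
        have hn' : (0 : ℝ) < n := Nat.cast_pos.2 hn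
        refine EReal.coe_le_coe_iff.2 ?_
        rw [div_add' _ _ _ hn'.ne']
        refine div_le_div_of_nonneg_right ?_ hn'.le
        calc log (coverNum (dynRefine T (↑U) n) E) ≤ log (C * n * exp (θ * n)) :=
              log_le_log (by exact_mod_cast one_le_coverNum (hasFiniteSubcover_dynRefine T hU n) E)
                (h n hn)
          _ = log (C * n) + θ * n := by rw [log_mul (by positivity) (exp_pos _).ne', log_exp]
    _ ≤ atTop.limsup fun _ : ℕ => (θ : EReal) := limsup_coe_add_le_of_tendsto_zero hlim
    _ = θ := limsup_const _

theorem le_coverEntropyOf_of_frequently {U : Finset (Set X)} {E : Set X} {θ : ℝ}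
    (h : ∃ᶠ n : ℕ in atTop, exp (θ * n) ≤ coverNum (dynRefine T (↑U) n) E) :
    (θ : EReal) ≤ coverEntropyOf T U E := by
  refine le_limsup_of_frequently_le ((h.and_eventually (eventually_gt_atTop 0)).mono
    fun n ⟨hn, hn0⟩ => ?_) (by isBoundedDefault)
  rw [EReal.coe_le_coe_iff, le_div_iff₀ (Nat.cast_pos.2 hn0)]
  calc θ * n = log (exp (θ * n)) := (log_exp _).symm
    _ ≤ log (coverNum (dynRefine T (↑U) n) E) := log_le_log (exp_pos _) hn

theorem exists_first_exp_le_coverNum {U : Finset (Set X)} (hU : ⋃₀ (U : Set (Set X)) = univ)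
    {θ : ℝ} (hθ : 0 ≤ θ) {E : Set X} (hE : θ < coverEntropyOf T U E) {ν : ℕ}
    (hν : ∃ V ∈ dynRefine T (↑U) ν, E ⊆ V) :
    ∃ m, ν < m ∧ exp (θ * m) ≤ coverNum (dynRefine T (↑U) m) E ∧
      ∀ n < m, (coverNum (dynRefine T (↑U) n) E : ℝ) ≤ exp (θ * n) := by
  have hex : ∃ m, ν < m ∧ exp (θ * m) ≤ coverNum (dynRefine T (↑U) m) E := by
    obtain ⟨m, hm, hνm⟩ := ((frequently_lt_of_lt_limsup (by isBoundedDefault) hE).and_eventually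
      (eventually_gt_atTop ν)).exists
    rw [EReal.coe_lt_coe_iff, lt_div_iff₀ (Nat.cast_pos.2 (Nat.zero_lt_of_lt hνm))] at hm
    refine ⟨m, hνm, ?_⟩
    calc exp (θ * m) ≤ exp (log (coverNum (dynRefine T (↑U) m) E)) := exp_le_exp.2 hm.le
      _ = coverNum (dynRefine T (↑U) m) E :=
        exp_log (by exact_mod_cast one_le_coverNum (hasFiniteSubcover_dynRefine T hU m) E)
  refine ⟨Nat.find hex, (Nat.find_spec hex).1, (Nat.find_spec hex).2, fun n hn => ?_⟩
  by_cases hνn : ν < n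
  · exact (not_le.1 fun h => Nat.find_min hex hn ⟨hνn, h⟩).le
  · obtain ⟨V, hV, hEV⟩ := hν
    obtain ⟨V', hV', hVV'⟩ := exists_superset_mem_dynRefine_of_le (not_lt.1 hνn) hV
    calc (coverNum (dynRefine T (↑U) n) E : ℝ) ≤ 1 := by
          exact_mod_cast coverNum_le_one hV' (hEV.trans hVV')
      _ ≤ exp (θ * n) := one_le_exp (by positivity)

end CoverEntropyOf

section RelCoverNum

variable {X : Type*} (T : X → X) {U W : Finset (Set X)}

theorem coverNum_le_relCoverNum (hU : ⋃₀ (U : Set (Set X)) = univ) {n : ℕ} {V : Set X}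
    (hV : V ∈ dynRefine T (↑W) n) : coverNum (dynRefine T (↑U) n) V ≤ relCoverNum T U W n := by
  refine le_csSup ⟨coverNum (dynRefine T (↑U) n) univ, ?_⟩ ⟨V, hV, rfl⟩
  rintro _ ⟨V', -, rfl⟩
  exact coverNum_mono (hasFiniteSubcover_dynRefine T hU n) (subset_univ V')

theorem one_le_relCoverNum [Nonempty X] (hU : ⋃₀ (U : Set (Set X)) = univ)
    (hW : ⋃₀ (W : Set (Set X)) = univ) (n : ℕ) : 1 ≤ relCoverNum T U W n := by
  obtain ⟨F, hF, hFcov⟩ := hasFiniteSubcover_dynRefine T hW n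
  obtain ⟨V, hVF, -⟩ := hFcov (mem_univ (Classical.arbitrary X))
  exact (one_le_coverNum (hasFiniteSubcover_dynRefine T hU n) V).trans
    (coverNum_le_relCoverNum T hU (hF hVF))

theorem coverNum_le_relCoverNum_pow (hU : ⋃₀ (U : Set (Set X)) = univ) (n₀ : ℕ) :
    ∀ q : ℕ, ∀ V ∈ dynRefine T (↑W) (q * n₀),
      coverNum (dynRefine T (↑U) (q * n₀)) V ≤ relCoverNum T U W n₀ ^ q
  | 0, V, _ => by simpa using coverNum_le_one (univ_mem_dynRefine_zero T ↑U) (subset_univ V)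
  | q + 1, V, hV => by
    rw [Nat.succ_mul] at hV ⊢
    obtain ⟨A, hA, B, hB, rfl⟩ := exists_eq_inter_preimage_of_mem_dynRefine_add hV
    calc coverNum (dynRefine T (↑U) (q * n₀ + n₀)) (A ∩ T^[q * n₀] ⁻¹' B)
        ≤ coverNum (dynRefine T (↑U) (q * n₀)) A * coverNum (dynRefine T (↑U) n₀) B :=
          coverNum_inter_preimage_le T hU _ _ A B
      _ ≤ relCoverNum T U W n₀ ^ q * relCoverNum T U W n₀ :=
          Nat.mul_le_mul (coverNum_le_relCoverNum_pow hU n₀ q A hA)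
            (coverNum_le_relCoverNum T hU hB)
      _ = relCoverNum T U W n₀ ^ (q + 1) := (pow_succ _ _).symm

theorem coverNum_le_coverNum_mul_relCoverNum_pow [Nonempty X] (hU : ⋃₀ (U : Set (Set X)) = univ)
    (hW : ⋃₀ (W : Set (Set X)) = univ) (n₀ q : ℕ) (E : Set X) :
    coverNum (dynRefine T (↑U) (q * n₀)) E ≤
      coverNum (dynRefine T (↑W) (q * n₀)) E * relCoverNum T U W n₀ ^ q :=
  coverNum_le_coverNum_mul (hasFiniteSubcover_dynRefine T hU _) (hasFiniteSubcover_dynRefine T hW _)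
    (Nat.one_le_pow _ _ (one_le_relCoverNum T hU hW n₀)) (coverNum_le_relCoverNum_pow T hU n₀ q) E

theorem log_coverNum_le [Nonempty X] (hU : ⋃₀ (U : Set (Set X)) = univ)
    (hW : ⋃₀ (W : Set (Set X)) = univ) (E : Set X) {n₀ : ℕ} (hn₀ : 0 < n₀) {L : ℝ} (hL : 0 ≤ L)
    {N₁ : ℕ} (hN₁ : ∀ n ≥ N₁, log (coverNum (dynRefine T (↑W) n) E) ≤ n * L) {n : ℕ}
    (hn : N₁ ≤ n) :
    log (coverNum (dynRefine T (↑U) n) E) ≤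
      (n + n₀) * (L + log (relCoverNum T U W n₀) / n₀) := by
  set R := relCoverNum T U W n₀
  set q := n / n₀ + 1
  have hq : n ≤ q * n₀ ∧ q * n₀ ≤ n + n₀ := by
    have h₁ := Nat.div_add_mod n n₀
    have h₂ := Nat.mod_lt n hn₀
    have h₃ : q * n₀ = n₀ * (n / n₀) + n₀ := by ring
    omega
  have hR : (0 : ℝ) < R := by exact_mod_cast one_le_relCoverNum T hU hW n₀
  have hNW : (0 : ℝ) < coverNum (dynRefine T (↑W) (q * n₀)) E := by
    exact_mod_cast one_le_coverNum (hasFiniteSubcover_dynRefine T hW _) E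
  have hcount : (coverNum (dynRefine T (↑U) n) E : ℝ) ≤
      coverNum (dynRefine T (↑W) (q * n₀)) E * R ^ q := by
    exact_mod_cast (coverNum_dynRefine_mono T hU hq.1 E).trans
      (coverNum_le_coverNum_mul_relCoverNum_pow T hU hW n₀ q E)
  have hρ : 0 ≤ L + log R / n₀ := add_nonneg hL (div_nonneg (log_natCast_nonneg _) n₀.cast_nonneg)
  calc log (coverNum (dynRefine T (↑U) n) E)
      ≤ log (coverNum (dynRefine T (↑W) (q * n₀)) E * R ^ q) :=
        log_le_log (by exact_mod_cast one_le_coverNum (hasFiniteSubcover_dynRefine T hU n) E) hcount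
    _ = log (coverNum (dynRefine T (↑W) (q * n₀)) E) + q * log R := by
        rw [log_mul hNW.ne' (pow_pos hR q).ne', log_pow]
    _ ≤ ((q * n₀ : ℕ) : ℝ) * L + q * log R := by
        gcongr
        exact hN₁ _ (hn.trans hq.1)
    _ = ((q * n₀ : ℕ) : ℝ) * (L + log R / n₀) := by
        push_cast
        field_simp
    _ ≤ (n + n₀) * (L + log R / n₀) := by
        gcongr
        exact_mod_cast hq.2

theorem coverEntropyOf_le_add_log_relCoverNum [Nonempty X] (hU : ⋃₀ (U : Set (Set X)) = univ)
    (hW : ⋃₀ (W : Set (Set X)) = univ) (E : Set X) {n₀ : ℕ} (hn₀ : 0 < n₀) :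
    coverEntropyOf T U E ≤
      coverEntropyOf T W E + (log (relCoverNum T U W n₀) / n₀ : ℝ) := by
  set ρ := log (relCoverNum T U W n₀) / n₀
  by_cases htop : coverEntropyOf T W E = ⊤
  · rw [htop, EReal.top_add_coe]
    exact le_top
  obtain ⟨L, hL⟩ : ∃ L : ℝ, coverEntropyOf T W E = L := ⟨_, (EReal.coe_toReal htop
    (ne_bot_of_le_ne_bot EReal.zero_ne_bot (coverEntropyOf_nonneg T W E))).symm⟩
  have hL₀ : 0 ≤ L := EReal.coe_nonneg.1 (hL ▸ coverEntropyOf_nonneg T W E)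
  rw [hL, ← EReal.coe_add]
  refine limsup_coe_le_of_forall_eventually_le fun η hη => ?_
  have hlt : coverEntropyOf T W E < ((L + η / 2 : ℝ) : EReal) :=
    hL ▸ EReal.coe_lt_coe_iff.2 (by linarith)
  obtain ⟨N₁, hN₁⟩ := eventually_atTop.1 (eventually_lt_of_limsup_lt hlt)
  have hW₁ : ∀ k ≥ max N₁ 1, log (coverNum (dynRefine T (↑W) k) E) ≤ k * (L + η / 2) := by
    intro k hk
    have hk' : (0 : ℝ) < k := Nat.cast_pos.2 (le_of_max_le_right hk)
    have := EReal.coe_lt_coe_iff.1 (hN₁ k (le_of_max_le_left hk))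
    rw [div_lt_iff₀ hk'] at this
    linarith
  have hvanish : ∀ᶠ n : ℕ in atTop, n₀ * (L + η / 2 + ρ) / n ≤ η / 2 :=
    (tendsto_const_div_atTop_nhds_zero_nat _).eventually (ge_mem_nhds (half_pos hη))
  filter_upwards [hvanish, eventually_ge_atTop (max N₁ 1)] with n hvn hn
  have hn' : (0 : ℝ) < n := Nat.cast_pos.2 (le_of_max_le_right hn)
  have key := log_coverNum_le T hU hW E hn₀ (by positivity : 0 ≤ L + η / 2) hW₁ hn
  rw [div_le_iff₀ hn'] at hvn ⊢
  nlinarith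

end RelCoverNum

section CoverEntropy

theorem isFinOpenCover_singleton_univ : IsFinOpenCover ({univ} : Finset (Set X)) :=
  ⟨by simp, by simp⟩

theorem coverEntropyOf_le_coverEntropy (T : X → X) {U : Finset (Set X)} (hU : IsFinOpenCover U)
    (E : Set X) : coverEntropyOf T U E ≤ coverEntropy T E :=
  le_iSup₂_of_le U hU le_rfl

@[simp]
theorem coverEntropy_empty (T : X → X) : coverEntropy T ∅ = 0 :=
  le_antisymm (iSup₂_le fun U _ => (coverEntropyOf_empty T U).le)
    ((coverEntropyOf_empty T {univ}).ge.trans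
      (coverEntropyOf_le_coverEntropy T isFinOpenCover_singleton_univ ∅))

theorem condTopEntropy_nonneg (T : X → X) : 0 ≤ condTopEntropy T :=
  le_iInf₂ fun _ _ => le_iSup₂_of_le {univ} isFinOpenCover_singleton_univ <|
    EReal.coe_nonneg.2 <| Real.iInf_nonneg fun _ =>
      div_nonneg (log_natCast_nonneg _) (by positivity)

theorem exists_isFinOpenCover_coverEntropy_le_add [Nonempty X] {T : X → X} {c : ℝ}
    (hc : condTopEntropy T = c) {ε : ℝ} (hε : 0 < ε) :
    ∃ W : Finset (Set X), IsFinOpenCover W ∧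
      ∀ E, coverEntropy T E ≤ coverEntropyOf T W E + (c + ε : ℝ) := by
  have hlt : condTopEntropy T < ((c + ε : ℝ) : EReal) := hc ▸ EReal.coe_lt_coe_iff.2 (by linarith)
  obtain ⟨W, hW, hWlt⟩ := by simpa only [condTopEntropy, iInf_lt_iff] using hlt
  refine ⟨W, hW, fun E => iSup₂_le fun U hU => ?_⟩
  obtain ⟨n, hn⟩ := exists_lt_of_ciInf_lt <| EReal.coe_lt_coe_iff.1 <|
    (le_iSup₂_of_le (f := fun U (_ : IsFinOpenCover U) =>
      ((⨅ n : ℕ, log (relCoverNum T U W (n + 1)) / (n + 1) : ℝ) : EReal)) U hU le_rfl).trans_lt hWlt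
  refine (coverEntropyOf_le_add_log_relCoverNum T hU.2 hW.2 E n.succ_pos).trans
    (add_le_add le_rfl (EReal.coe_le_coe_iff.2 ?_))
  exact_mod_cast hn.le

end CoverEntropy

section Metric

open Metric

variable {X : Type*} [MetricSpace X] {T : X → X}

def dynClosedBall (T : X → X) (n : ℕ) (r : ℝ) (x : X) : Set X :=
  {y | ∀ i < n, dist (T^[i] x) (T^[i] y) ≤ r}

def IsDynSeparated (T : X → X) (n : ℕ) (r : ℝ) (Q : Set X) : Prop :=
  Q.Pairwise fun p q => q ∉ dynClosedBall T n r p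

theorem mem_dynClosedBall_comm {n : ℕ} {r : ℝ} {x y : X} :
    y ∈ dynClosedBall T n r x ↔ x ∈ dynClosedBall T n r y := by
  simp only [dynClosedBall, mem_ofPred_eq, dist_comm]

theorem mem_dynClosedBall_self (n : ℕ) {r : ℝ} (hr : 0 ≤ r) (x : X) :
    x ∈ dynClosedBall T n r x := fun i _ => by simpa using hr

theorem phiSet_subset_dynClosedBall (n : ℕ) (r : ℝ) (x : X) :
    phiSet T r x ⊆ dynClosedBall T n r x := fun _ hy i _ => hy i

theorem isClosed_phiSet (hT : Continuous T) (r : ℝ) (x : X) : IsClosed (phiSet T r x) := by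
  simp only [phiSet, ofPred_forall]
  exact isClosed_iInter fun i => isClosed_le (continuous_const.dist (hT.iterate i)) continuous_const

theorem isClosed_dynClosedBall (hT : Continuous T) (n : ℕ) (r : ℝ) (x : X) :
    IsClosed (dynClosedBall T n r x) := by
  simp only [dynClosedBall, ofPred_forall]
  exact isClosed_iInter fun i => isClosed_iInter fun _ =>
    isClosed_le (continuous_const.dist (hT.iterate i)) continuous_const

theorem dynClosedBall_mem_nhds (hT : Continuous T) (n : ℕ) {r : ℝ} (hr : 0 < r) (x : X) :
    dynClosedBall T n r x ∈ nhds x := by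
  have h : ∀ i ∈ Finset.range n, ∀ᶠ y in nhds x, dist (T^[i] x) (T^[i] y) ≤ r := fun i _ =>
    ((continuous_const.dist (hT.iterate i)).tendsto x).eventually
      (ge_mem_nhds (by simpa using hr))
  exact ((Finset.eventually_all _).2 h).mono fun y hy i hi => hy i (Finset.mem_range.2 hi)

theorem exists_mem_dynRefine_superset_dynClosedBall {W : Set (Set X)} {r : ℝ}
    (hWr : ∀ x, ∃ w ∈ W, closedBall x r ⊆ w) (n : ℕ) (x : X) :
    ∃ V ∈ dynRefine T W n, dynClosedBall T n r x ⊆ V :=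
  exists_mem_dynRefine_superset fun i hi =>
    let ⟨w, hw, hxw⟩ := hWr (T^[i] x)
    ⟨w, hw, fun _ hy => hxw (mem_closedBall_comm.1 (hy i hi))⟩

theorem IsFinOpenCover.exists_pos_forall_closedBall_subset [CompactSpace X] {W : Finset (Set X)}
    (hW : IsFinOpenCover W) : ∃ r > 0, ∀ x, ∃ w ∈ W, closedBall x r ⊆ w := by
  obtain ⟨δ, hδ, h⟩ :=
    lebesgue_number_lemma_of_metric_sUnion isCompact_univ (fun w hw => hW.1 w hw) hW.2.ge
  refine ⟨δ / 2, half_pos hδ, fun x => ?_⟩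
  obtain ⟨w, hw, hxw⟩ := h x (mem_univ x)
  exact ⟨w, hw, (closedBall_subset_ball (half_lt_self hδ)).trans hxw⟩

theorem exists_isFinOpenCover_dist_le_s11 [CompactSpace X] {r : ℝ} (hr : 0 < r) :
    ∃ U : Finset (Set X), IsFinOpenCover U ∧ ∀ u ∈ U, ∀ x ∈ u, ∀ y ∈ u, dist x y ≤ r := by
  obtain ⟨t, -, ht, hcov⟩ := finite_cover_balls_of_compact (isCompact_univ (X := X)) (half_pos hr)
  refine ⟨ht.toFinset.image (ball · (r / 2)), ⟨?_, ?_⟩, ?_⟩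
  · simp only [Finset.mem_image, Finite.mem_toFinset, forall_exists_index, and_imp]
    rintro _ z - rfl
    exact isOpen_ball
  · refine eq_univ_of_univ_subset fun x hx => ?_
    obtain ⟨z, hz, hxz⟩ := mem_iUnion₂.1 (hcov hx)
    exact ⟨_, Finset.mem_image_of_mem _ (ht.mem_toFinset.2 hz), hxz⟩
  · simp only [Finset.mem_image, Finite.mem_toFinset, forall_exists_index, and_imp]
    rintro _ z - rfl x hx y hy
    linarith [dist_triangle_right x y z, mem_ball.1 hx, mem_ball.1 hy]

theorem card_le_coverNum_of_isDynSeparated {U : Finset (Set X)} (hU : ⋃₀ (U : Set (Set X)) = univ)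
    {r : ℝ} (hUr : ∀ u ∈ U, ∀ x ∈ u, ∀ y ∈ u, dist x y ≤ r) {n : ℕ} {Q : Finset X}
    (hQ : IsDynSeparated T n r ↑Q) {K : Set X} (hQK : ↑Q ⊆ K) :
    Q.card ≤ coverNum (dynRefine T (↑U) n) K := by
  refine card_le_coverNum (hasFiniteSubcover_dynRefine T hU n) hQK ?_
  rintro _ ⟨f, hf, rfl⟩ p hp q hq hpV hqV
  by_contra hpq
  refine hQ hp hq hpq fun i hi => hUr _ (hf i hi) _ ?_ _ ?_
  · exact mem_iInter₂.1 hpV i (Finset.mem_range.2 hi)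
  · exact mem_iInter₂.1 hqV i (Finset.mem_range.2 hi)

theorem exists_isDynSeparated_subset_biUnion [CompactSpace X] (T : X → X) {r : ℝ} (hr : 0 < r)
    (E : Set X) (n : ℕ) : ∃ Q : Finset X, ↑Q ⊆ E ∧ IsDynSeparated T n r ↑Q ∧
      E ⊆ ⋃ p ∈ Q, dynClosedBall T n r p := by
  obtain ⟨U, hU, hUr⟩ := exists_isFinOpenCover_dist_le_s11 (X := X) hr
  set S := {k | ∃ Q : Finset X, ↑Q ⊆ E ∧ IsDynSeparated T n r ↑Q ∧ Q.card = k}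
  have hS : BddAbove S := ⟨coverNum (dynRefine T (↑U) n) univ, by
    rintro _ ⟨Q, -, hQ, rfl⟩
    exact card_le_coverNum_of_isDynSeparated hU.2 hUr hQ (subset_univ _)⟩
  have h0 : 0 ∈ S := ⟨∅, by simp, by simp [IsDynSeparated], rfl⟩
  obtain ⟨Q, hQE, hQ, hQS⟩ := Nat.sSup_mem ⟨0, h0⟩ hS
  refine ⟨Q, hQE, hQ, fun x hx => ?_⟩
  by_contra hxQ
  simp only [mem_iUnion₂, not_exists] at hxQ
  have hxQ' : x ∉ Q := fun h => hxQ x h (mem_dynClosedBall_self n hr.le x)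
  have hins : (insert x Q).card ∈ S := by
    refine ⟨insert x Q, ?_, ?_, rfl⟩
    · rw [Finset.coe_insert]
      exact insert_subset hx hQE
    · rw [Finset.coe_insert, IsDynSeparated, pairwise_insert]
      exact ⟨hQ, fun p hp _ => ⟨fun h => hxQ p hp (mem_dynClosedBall_comm.1 h), hxQ p hp⟩⟩
  have := le_csSup hS hins
  rw [Finset.card_insert_of_notMem hxQ', hQS] at this
  omega

theorem exists_isDynSeparated_card_eq [CompactSpace X] {W : Finset (Set X)}
    (hW : ⋃₀ (W : Set (Set X)) = univ) {r : ℝ} (hr : 0 < r)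
    (hWr : ∀ x, ∃ w ∈ W, closedBall x r ⊆ w) {E : Set X} (hE : E.Nonempty) {m k : ℕ}
    (hk : k ≤ coverNum (dynRefine T (↑W) m) E) :
    ∃ Q : Finset X, ↑Q ⊆ E ∧ IsDynSeparated T m r ↑Q ∧ Q.card = k := by
  obtain ⟨Q, hQE, hQ, hEQ⟩ := exists_isDynSeparated_subset_biUnion T hr E m
  have hQne : Q.Nonempty :=
    let ⟨_, hx⟩ := hE
    let ⟨p, hp, _⟩ := mem_iUnion₂.1 (hEQ hx)
    ⟨p, hp⟩
  have hcard : coverNum (dynRefine T (↑W) m) E ≤ Q.card :=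
    coverNum_le_card_of_subset_biUnion (hasFiniteSubcover_dynRefine T hW m) hQne hEQ fun p _ =>
      exists_mem_dynRefine_superset_dynClosedBall hWr m p
  obtain ⟨Q', hQ'Q, hQ'⟩ := Finset.exists_subset_card_eq (hk.trans hcard)
  have hQ'Q : (Q' : Set X) ⊆ Q := Finset.coe_subset.2 hQ'Q
  exact ⟨Q', hQ'Q.trans hQE, Set.Pairwise.mono hQ'Q hQ, hQ'⟩

theorem exists_isClosed_coverNum_le_card (hT : Continuous T) {W : Finset (Set X)}
    (hW : ⋃₀ (W : Set (Set X)) = univ) {r : ℝ} (hr : 0 ≤ r)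
    (hWr : ∀ x, ∃ w ∈ W, closedBall x r ⊆ w) {E : Set X} (hE : IsClosed E) {Q : Finset X}
    (hQ : Q.Nonempty) (hQE : ↑Q ⊆ E) :
    ∃ B, IsClosed B ∧ ↑Q ⊆ B ∧ B ⊆ E ∧ ∀ n, coverNum (dynRefine T (↑W) n) B ≤ Q.card := by
  refine ⟨⋃ p ∈ Q, E ∩ phiSet T r p, Q.finite_toSet.isClosed_biUnion fun p _ =>
    hE.inter (isClosed_phiSet hT r p), fun p hp => mem_iUnion₂.2 ⟨p, hp, hQE hp, fun i => ?_⟩,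
    iUnion₂_subset fun _ _ => inter_subset_left, fun n => ?_⟩
  · simpa using hr
  refine coverNum_le_card_of_subset_biUnion (hasFiniteSubcover_dynRefine T hW n) hQ subset_rfl
    fun p _ => ?_
  obtain ⟨V, hV, hpV⟩ := exists_mem_dynRefine_superset_dynClosedBall (T := T) hWr n p
  exact ⟨V, hV, inter_subset_right.trans ((phiSet_subset_dynClosedBall n r p).trans hpV)⟩

theorem exists_isCompact_subset_lt_coverEntropyOf (hT : Continuous T) {W : Finset (Set X)}
    (hW : ⋃₀ (W : Set (Set X)) = univ) {r : ℝ} (hr : 0 < r)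
    (hWr : ∀ x, ∃ w ∈ W, closedBall x r ⊆ w) {E : Set X} (hE : IsCompact E) (hEne : E.Nonempty)
    {θ : EReal} (hθE : θ < coverEntropyOf T W E) (n : ℕ) :
    ∃ E' ⊆ E, IsCompact E' ∧ θ < coverEntropyOf T W E' ∧ ∃ V ∈ dynRefine T (↑W) n, E' ⊆ V := by
  obtain ⟨t, -, hEt⟩ := hE.elim_nhds_subcover (dynClosedBall T n r) fun x _ =>
    dynClosedBall_mem_nhds hT n hr x
  have ht : t.Nonempty :=
    let ⟨_, hx⟩ := hEne
    let ⟨p, hp, _⟩ := mem_iUnion₂.1 (hEt hx)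
    ⟨p, hp⟩
  obtain ⟨p, -, hp⟩ := exists_mem_le_coverEntropyOf hW ht (fun p => E ∩ dynClosedBall T n r p)
    fun x hx =>
      let ⟨p, hp, hxp⟩ := mem_iUnion₂.1 (hEt hx)
      mem_iUnion₂.2 ⟨p, hp, hx, hxp⟩
  obtain ⟨V, hV, hpV⟩ := exists_mem_dynRefine_superset_dynClosedBall (T := T) hWr n p
  exact ⟨_, inter_subset_left, hE.inter_right (isClosed_dynClosedBall hT n r p), hθE.trans_le hp,
    V, hV, inter_subset_right.trans hpV⟩

structure LoweringStage (T : X → X) (W : Finset (Set X)) (θ : ℝ) where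
  carrier : Set X
  depth : ℕ
  isCompact : IsCompact carrier
  lt_coverEntropyOf : θ < coverEntropyOf T W carrier
  exists_cell : ∃ V ∈ dynRefine T (↑W) depth, carrier ⊆ V

theorem LoweringStage.exists_next [CompactSpace X] (hT : Continuous T) {W : Finset (Set X)}
    (hW : ⋃₀ (W : Set (Set X)) = univ) {r : ℝ} (hr : 0 < r)
    (hWr : ∀ x, ∃ w ∈ W, closedBall x r ⊆ w) {θ : ℝ} (hθ : 0 ≤ θ) (s : LoweringStage T W θ) :
    ∃ (s' : LoweringStage T W θ) (m : ℕ) (Q : Finset X) (B : Set X),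
      s.depth < m ∧ m < s'.depth ∧ s'.carrier ⊆ s.carrier ∧ IsClosed B ∧ B ⊆ s.carrier ∧
      ↑Q ⊆ B ∧ IsDynSeparated T m r ↑Q ∧ exp (θ * m) ≤ Q.card ∧
      ∀ n, (coverNum (dynRefine T (↑W) n) B : ℝ) ≤ exp (θ * n) + 1 := by
  have hE : s.carrier.Nonempty := nonempty_iff_ne_empty.2 fun h => by
    have := s.lt_coverEntropyOf
    rw [h, coverEntropyOf_empty] at this
    exact (EReal.coe_nonneg.2 hθ).not_gt this
  obtain ⟨m, hνm, hm, hbelow⟩ :=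
    exists_first_exp_le_coverNum hW hθ s.lt_coverEntropyOf s.exists_cell
  obtain ⟨Q, hQE, hQ, hQcard⟩ := exists_isDynSeparated_card_eq hW hr hWr hE (Nat.ceil_le.2 hm)
  have hQne : Q.Nonempty := Finset.card_pos.1 (hQcard ▸ Nat.ceil_pos.2 (exp_pos _))
  obtain ⟨B, hB, hQB, hBE, hBQ⟩ :=
    exists_isClosed_coverNum_le_card hT hW hr.le hWr s.isCompact.isClosed hQne hQE
  obtain ⟨E', hE'E, hE', hE'θ, hE'cell⟩ :=
    exists_isCompact_subset_lt_coverEntropyOf hT hW hr hWr s.isCompact hE s.lt_coverEntropyOf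
      (m + 1)
  refine ⟨⟨E', m + 1, hE', hE'θ, hE'cell⟩, m, Q, B, hνm, m.lt_succ_self, hE'E, hB, hBE, hQB, hQ,
    hQcard ▸ Nat.le_ceil _, fun n => ?_⟩
  rcases lt_or_ge n m with hnm | hmn
  · calc (coverNum (dynRefine T (↑W) n) B : ℝ) ≤ coverNum (dynRefine T (↑W) n) s.carrier := by
          exact_mod_cast coverNum_mono (hasFiniteSubcover_dynRefine T hW n) hBE
      _ ≤ exp (θ * n) + 1 := (hbelow n hnm).trans (le_add_of_nonneg_right zero_le_one)
  · calc (coverNum (dynRefine T (↑W) n) B : ℝ) ≤ Q.card := by exact_mod_cast hBQ n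
      _ ≤ exp (θ * m) + 1 := hQcard ▸ (Nat.ceil_lt_add_one (exp_pos _).le).le
      _ ≤ exp (θ * n) + 1 := by gcongr

theorem exists_isCompact_subset_coverEntropyOf_le_le_coverEntropy [CompactSpace X]
    (hT : Continuous T) {W : Finset (Set X)} (hW : IsFinOpenCover W) {θ : ℝ} (hθ : 0 ≤ θ)
    {K : Set X} (hK : IsCompact K) (hKθ : θ < coverEntropyOf T W K) :
    ∃ K' ⊆ K, IsCompact K' ∧ coverEntropyOf T W K' ≤ θ ∧ θ ≤ coverEntropy T K' := by
  obtain ⟨r, hr, hWr⟩ := hW.exists_pos_forall_closedBall_subset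
  obtain ⟨U, hU, hUr⟩ := exists_isFinOpenCover_dist_le_s11 (X := X) hr
  choose next m Q B hm hm' hsub hB hBs hQB hQ hQcard hBcount using
    LoweringStage.exists_next hT hW.2 hr hWr hθ
  let s : ℕ → LoweringStage T W θ := fun k =>
    next^[k] ⟨K, 0, hK, hKθ, univ, univ_mem_dynRefine_zero T _, subset_univ K⟩
  have hs : ∀ k, s (k + 1) = next (s k) := fun k => Function.iterate_succ_apply' next k _
  have hdepth : ∀ k, k ≤ (s k).depth := by
    intro k
    induction k with
    | zero => exact Nat.zero_le _
    | succ k ih =>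
      rw [hs]
      have := hm (s k)
      have := hm' (s k)
      omega
  have hanti : Antitone fun k => (s k).carrier :=
    antitone_nat_of_succ_le fun k => by rw [hs]; exact hsub (s k)
  set K' := ⋂ j, (⋃ k ∈ Finset.range j, B (s k)) ∪ (s j).carrier
  have hBK' : ∀ k, B (s k) ⊆ K' := fun k => subset_iInter fun j => by
    rcases lt_or_ge k j with hkj | hjk
    · exact subset_union_of_subset_left
        (Finset.subset_set_biUnion_of_mem (f := fun k => B (s k)) (Finset.mem_range.2 hkj)) _
    · exact subset_union_of_subset_right ((hBs (s k)).trans (hanti hjk)) _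
  have hK' : IsClosed K' := isClosed_iInter fun j =>
    ((Finset.range j).finite_toSet.isClosed_biUnion fun k _ => hB (s k)).union
      (s j).isCompact.isClosed
  have hcount : ∀ n, 0 < n → (coverNum (dynRefine T (↑W) n) K' : ℝ) ≤ 3 * n * exp (θ * n) := by
    intro n hn
    have hV := hasFiniteSubcover_dynRefine T hW.2 n
    have hcell : coverNum (dynRefine T (↑W) n) (s n).carrier ≤ 1 := by
      obtain ⟨V, hV', hsV⟩ := (s n).exists_cell
      obtain ⟨V', hV'', hVV'⟩ := exists_superset_mem_dynRefine_of_le (hdepth n) hV'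
      exact coverNum_le_one hV'' (hsV.trans hVV')
    have hK'n : coverNum (dynRefine T (↑W) n) K' ≤
        ∑ k ∈ Finset.range n, coverNum (dynRefine T (↑W) n) (B (s k)) + 1 :=
      (coverNum_mono hV (iInter_subset _ n)).trans <| (coverNum_union_le hV _ _).trans <|
        add_le_add (coverNum_biUnion_le hV (Finset.nonempty_range_iff.2 hn.ne') _) hcell
    have hsum : ∑ k ∈ Finset.range n, (coverNum (dynRefine T (↑W) n) (B (s k)) : ℝ) ≤
        n * (exp (θ * n) + 1) := by
      exact (Finset.sum_le_sum fun k _ => hBcount (s k) n).trans_eq (by simp [mul_add])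
    have h1 : (1 : ℝ) ≤ exp (θ * n) := one_le_exp (by positivity)
    have h2 : (1 : ℝ) ≤ n := by exact_mod_cast hn
    calc (coverNum (dynRefine T (↑W) n) K' : ℝ)
        ≤ ∑ k ∈ Finset.range n, (coverNum (dynRefine T (↑W) n) (B (s k)) : ℝ) + 1 := by
          exact_mod_cast hK'n
      _ ≤ 3 * n * exp (θ * n) := by nlinarith
  refine ⟨K', (iInter_subset _ 0).trans (by simp [s]), hK'.isCompact,
    coverEntropyOf_le_of_coverNum_le hW.2 three_pos hcount, ?_⟩
  refine (le_coverEntropyOf_of_frequently (frequently_atTop.2 fun N => ?_)).trans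
    (coverEntropyOf_le_coverEntropy T hU K')
  refine ⟨m (s N), (hdepth N).trans (hm (s N)).le, (hQcard (s N)).trans ?_⟩
  exact_mod_cast card_le_coverNum_of_isDynSeparated hU.2 hUr (hQ (s N)) ((hQB _).trans (hBK' N))

theorem exists_isCompact_subset_coverEntropy_mem_Icc [CompactSpace X] (hT : Continuous T)
    {K : Set X} (hK : IsCompact K) {a c : ℝ} (ha : coverEntropy T K = a)
    (hc : condTopEntropy T = c) {h : ℝ} (h0 : 0 ≤ h) (hle : h ≤ a - c) {δ : ℝ} (hδ : 0 < δ) :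
    ∃ K' ⊆ K, IsCompact K' ∧ ∃ r : ℝ, coverEntropy T K' = r ∧ h - δ ≤ r ∧ r ≤ h + c := by
  have hc0 : 0 ≤ c := EReal.coe_nonneg.1 (hc ▸ condTopEntropy_nonneg T)
  rcases lt_or_ge h δ with hhδ | hδh
  · exact ⟨∅, empty_subset K, isCompact_empty, 0, by simp, by linarith, by linarith⟩
  have : Nonempty X := by
    by_contra hX
    rw [not_nonempty_iff] at hX
    rw [eq_empty_of_isEmpty K, coverEntropy_empty] at ha
    linarith [EReal.coe_eq_zero.1 ha.symm]
  obtain ⟨W, hW, hWE⟩ := exists_isFinOpenCover_coverEntropy_le_add hc (half_pos hδ)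
  have hKθ : ((h - δ : ℝ) : EReal) < coverEntropyOf T W K := by
    refine lt_of_lt_of_le (EReal.coe_lt_coe_iff.2 (by linarith : h - δ < a - (c + δ / 2))) ?_
    rw [EReal.coe_sub]
    exact EReal.sub_le_of_le_add (ha ▸ hWE K)
  obtain ⟨K', hK'K, hK', hup, hlow⟩ :=
    exists_isCompact_subset_coverEntropyOf_le_le_coverEntropy hT hW (sub_nonneg.2 hδh) hK hKθ
  have hup' : coverEntropy T K' ≤ ((h - δ + (c + δ / 2) : ℝ) : EReal) :=
    (hWE K').trans (by rw [EReal.coe_add]; exact add_le_add hup le_rfl)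
  set r := (coverEntropy T K').toReal
  have hr : coverEntropy T K' = r := (EReal.coe_toReal
    (ne_top_of_le_ne_top (EReal.coe_ne_top _) hup')
    (ne_bot_of_le_ne_bot (EReal.coe_ne_bot _) hlow)).symm
  rw [hr, EReal.coe_le_coe_iff] at hup' hlow
  exact ⟨K', hK'K, hK', r, hr, hlow, by linarith⟩

end Metric

theorem closure_inter_Icc_nonempty_of_forall_exists {S : Set ℝ} {a b : ℝ}
    (h : ∀ δ > 0, ∃ r ∈ S, a - δ ≤ r ∧ r ≤ b) : (closure S ∩ Icc a b).Nonempty := by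
  have hA : (S ∩ Iic b).Nonempty :=
    let ⟨r, hrS, _, hrb⟩ := h 1 one_pos
    ⟨r, hrS, hrb⟩
  have hAb : BddAbove (S ∩ Iic b) := ⟨b, fun _ hr => hr.2⟩
  refine ⟨sSup (S ∩ Iic b), closure_mono inter_subset_left (csSup_mem_closure hA hAb), ?_,
    csSup_le hA fun _ hr => hr.2⟩
  refine le_of_forall_pos_le_add fun δ hδ => ?_
  obtain ⟨r, hrS, hr, hrb⟩ := h δ hδ
  linarith [le_csSup hAb ⟨hrS, hrb⟩]

theorem closure_coverEntropies_meets_interval_general {X : Type*} [MetricSpace X] [CompactSpace X]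
    (T : X ≃ₜ X)
    (K : Set X) (hK : IsCompact K) (a c : ℝ)
    (ha : coverEntropy (⇑T) K = (a : EReal)) (hc : condTopEntropy (⇑T) = (c : EReal))
    (h : ℝ) (h0 : 0 ≤ h) (hle : h ≤ a - c) :
    (closure {r : ℝ | ∃ K' : Set X, K' ⊆ K ∧ IsCompact K' ∧
        coverEntropy (⇑T) K' = (r : EReal)} ∩ Set.Icc h (h + c)).Nonempty :=
  closure_inter_Icc_nonempty_of_forall_exists fun _ hδ =>
    let ⟨K', hK'K, hK', r, hr, hlo, hhi⟩ :=
      exists_isCompact_subset_coverEntropy_mem_Icc T.continuous hK ha hc h0 hle hδ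
    ⟨r, ⟨K', hK'K, hK', hr⟩, hlo, hhi⟩

/-- If `h(T, K) > h^*(T, X)` then for each `0 ≤ h ≤ h(T, K) - h^*(T, X)` the closure of
`{h(T, K') : K' ⊆ K compact}` meets `[h, h + h^*(T, X)]`. -/
theorem closure_coverEntropies_meets_interval {X : Type*} [MetricSpace X] [CompactSpace X]
    (T : X ≃ₜ X) (hfin : coverEntropy (⇑T) Set.univ ≠ ⊤)
    (K : Set X) (hK : IsCompact K) (a c : ℝ)
    (ha : coverEntropy (⇑T) K = (a : EReal)) (hc : condTopEntropy (⇑T) = (c : EReal))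
    (hgt : c < a) (h : ℝ) (h0 : 0 ≤ h) (hle : h ≤ a - c) :
    (closure {r : ℝ | ∃ K' : Set X, K' ⊆ K ∧ IsCompact K' ∧
        coverEntropy (⇑T) K' = (r : EReal)} ∩ Set.Icc h (h + c)).Nonempty :=
  closure_coverEntropies_meets_interval_general T K hK a c ha hc h h0 hle

end Lowering
end
end
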